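/- arXiv:2306.16825 — 10 statements merged into one kernel-verified Lean document; each statement's English description precedes it below -/
import Mathlib

section
/- Let s, t, r be integers with 2 ≤ s ≤ t ≤ r+1, and suppose t ≥ 3. If (A,B,C) ∈ ℤ³ satisfies A,B,C ≥ 0, sA + (s-1)C ≤ r+1-s, tB + (t-1)C ≤ r+1-t, and A + B + C = ⌊(r+1)/s⌋ + ⌊(r+1)/t⌋ - 1, then C = 1. -/
/-- Top-slice lemma: if `2 ≤ s ≤ t ≤ r+1`, `t ≥ 3`, and `(A,B,C) ∈ ℤ³` is a nonnegative
point of the polytope `sA+(s-1)C ≤ r+1-s`, `tB+(t-1)C ≤ r+1-t` lying on the plane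
`A+B+C = ⌊(r+1)/s⌋ + ⌊(r+1)/t⌋ - 1`, then `C = 1`. -/
theorem top_slice_C_eq_one (s t r A B C : ℤ) (hs : 2 ≤ s) (hst : s ≤ t) (htr : t ≤ r + 1)
    (ht3 : 3 ≤ t) (hA : 0 ≤ A) (hB : 0 ≤ B) (hC : 0 ≤ C)
    (h1 : s * A + (s - 1) * C ≤ r + 1 - s)
    (h2 : t * B + (t - 1) * C ≤ r + 1 - t)
    (hplane : A + B + C = (r + 1) / s + (r + 1) / t - 1) :
    C = 1 := by
  have hs0 : (0:ℤ) < s := by omega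
  have ht0 : (0:ℤ) < t := by omega
  set qs := (r + 1) / s with hqs
  set qt := (r + 1) / t with hqt
  have hds : s * qs + (r + 1) % s = r + 1 := Int.mul_ediv_add_emod (r + 1) s
  have hdt : t * qt + (r + 1) % t = r + 1 := Int.mul_ediv_add_emod (r + 1) t
  have hrs0 : 0 ≤ (r + 1) % s := Int.emod_nonneg _ (by omega)
  have hrs1 : (r + 1) % s < s := Int.emod_lt_of_pos _ hs0
  have hrt0 : 0 ≤ (r + 1) % t := Int.emod_nonneg _ (by omega)
  have hrt1 : (r + 1) % t < t := Int.emod_lt_of_pos _ ht0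
  rcases lt_trichotomy C 1 with hC1 | hC1 | hC1
  · -- C = 0 : impossible
    exfalso
    have hC0 : C = 0 := by omega
    subst hC0
    have e1 : (s - 1) * (0:ℤ) = 0 := by ring
    have e2 : (t - 1) * (0:ℤ) = 0 := by ring
    have kA : s * A < s * qs := by linarith
    have kB : t * B < t * qt := by linarith
    have hA' : A < qs := lt_of_mul_lt_mul_left kA hs0.le
    have hB' : B < qt := lt_of_mul_lt_mul_left kB ht0.le
    omega
  · exact hC1
  · -- C ≥ 2 : impossible
    exfalso
    set cs := (C + s - 1) / s with hcs
    set ct := (C + t - 1) / t with hct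
    have hds2 : s * cs + (C + s - 1) % s = C + s - 1 := Int.mul_ediv_add_emod _ _
    have hdt2 : t * ct + (C + t - 1) % t = C + t - 1 := Int.mul_ediv_add_emod _ _
    have hms0 : 0 ≤ (C + s - 1) % s := Int.emod_nonneg _ (by omega)
    have hms1 : (C + s - 1) % s < s := Int.emod_lt_of_pos _ hs0
    have hmt0 : 0 ≤ (C + t - 1) % t := Int.emod_nonneg _ (by omega)
    have hmt1 : (C + t - 1) % t < t := Int.emod_lt_of_pos _ ht0
    have hcsC : C ≤ s * cs := by linarith
    have hcsC' : s * cs ≤ C + s - 1 := by linarith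
    have hctC : C ≤ t * ct := by linarith
    have hctC' : t * ct ≤ C + t - 1 := by linarith
    -- A < qs - C + cs
    have e1 : (s - 1) * C = s * C - C := by ring
    have e2 : (t - 1) * C = t * C - C := by ring
    have kA : s * A < s * (qs - C + cs) := by
      have : s * (qs - C + cs) = s * qs - s * C + s * cs := by ring
      linarith
    have hA' : A < qs - C + cs := lt_of_mul_lt_mul_left kA hs0.le
    have kB : t * B < t * (qt - C + ct) := by
      have : t * (qt - C + ct) = t * qt - t * C + t * ct := by ring
      linarith
    have hB' : B < qt - C + ct := lt_of_mul_lt_mul_left kB ht0.le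
    -- cs, ct ≥ 1
    have hcs1 : 1 ≤ cs := by
      by_contra h
      have : cs ≤ 0 := by omega
      have : s * cs ≤ 0 := mul_nonpos_of_nonneg_of_nonpos hs0.le this
      linarith
    have hct1 : 1 ≤ ct := by
      by_contra h
      have : ct ≤ 0 := by omega
      have : t * ct ≤ 0 := mul_nonpos_of_nonneg_of_nonpos ht0.le this
      linarith
    -- 2*(cs-1) ≤ s*(cs-1) = s*cs - s ≤ C - 1, similarly with 3 and t
    have k2 : 2 * (cs - 1) ≤ s * (cs - 1) :=
      mul_le_mul_of_nonneg_right hs (by omega)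
    have k3 : 3 * (ct - 1) ≤ t * (ct - 1) :=
      mul_le_mul_of_nonneg_right ht3 (by omega)
    have k2' : s * (cs - 1) = s * cs - s := by ring
    have k3' : t * (ct - 1) = t * ct - t := by ring
    -- hence 2*cs ≤ C + 1, 3*ct ≤ C + 2, while plane forces C + 1 ≤ cs + ct
    have hsum : C + 1 ≤ cs + ct := by linarith
    linarith
end

section
/- Let s, t, r be integers with 2 ≤ s ≤ t ≤ r+1 and t ≥ 3. The set of integer points (A,B,C) with A,B,C ≥ 0, sA + (s-1)C ≤ r+1-s, tB + (t-1)C ≤ r+1-t, and A+B+C = ⌊(r+1)/s⌋ + ⌊(r+1)/t⌋ - 1 is nonempty if and only if r+1 ≡ s-1 (mod s) and r+1 ≡ t-1 (mod t); moreover, when nonempty it consists of the single point (⌊(r+1)/s⌋-1, ⌊(r+1)/t⌋-1, 1). -/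
lemma boundC_fwd (s t r A B C : ℤ) (hs : 2 ≤ s) (hst : s ≤ t) (htr : t ≤ r + 1) (ht3 : 3 ≤ t)
    (h0A : 0 ≤ A) (h0B : 0 ≤ B) (h0C : 0 ≤ C)
    (h1 : s * A + (s - 1) * C ≤ r + 1 - s)
    (h2 : t * B + (t - 1) * C ≤ r + 1 - t)
    (h3 : A + B + C = (r + 1) / s + (r + 1) / t - 1) :
    (r + 1) % s = s - 1 ∧ (r + 1) % t = t - 1 ∧
      A = (r + 1) / s - 1 ∧ B = (r + 1) / t - 1 ∧ C = 1 := by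
  set n := r + 1 with hn
  set qs := n / s with hqs
  set rs := n % s with hrs
  set qt := n / t with hqt
  set rt := n % t with hrt
  have es : s * qs + rs = n := Int.mul_ediv_add_emod n s
  have et : t * qt + rt = n := Int.mul_ediv_add_emod n t
  have hrs0 : 0 ≤ rs := Int.emod_nonneg n (by omega)
  have hrslt : rs < s := Int.emod_lt_of_pos n (by omega)
  have hrt0 : 0 ≤ rt := Int.emod_nonneg n (by omega)
  have hrtlt : rt < t := Int.emod_lt_of_pos n (by omega)
  have st1 : s * (A + C - qs + 1) ≤ rs + C := by nlinarith
  have st2 : t * (B + C - qt + 1) ≤ rt + C := by nlinarith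
  have hstp : s + t + 1 ≤ s * t := by nlinarith
  have key : (C - 1) * (s * t - s - t) ≤ 0 := by
    nlinarith [mul_le_mul_of_nonneg_left st1 (by linarith : (0:ℤ) ≤ t),
      mul_le_mul_of_nonneg_left st2 (by linarith : (0:ℤ) ≤ s),
      mul_le_mul_of_nonneg_left (show rs ≤ s - 1 by omega) (by linarith : (0:ℤ) ≤ t),
      mul_le_mul_of_nonneg_left (show rt ≤ t - 1 by omega) (by linarith : (0:ℤ) ≤ s)]
  have hC1 : C ≤ 1 := by nlinarith [key, hstp]
  have hqs1 : 1 ≤ qs := by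
    by_contra hc
    push_neg at hc
    have : s * qs ≤ 0 := mul_nonpos_of_nonneg_of_nonpos (by omega) (by omega)
    omega
  have hqt1 : 1 ≤ qt := by
    by_contra hc
    push_neg at hc
    have : t * qt ≤ 0 := mul_nonpos_of_nonneg_of_nonpos (by omega) (by omega)
    omega
  have hCne : C ≠ 0 := by
    intro hC0
    subst hC0
    have hA : A + 0 - qs + 1 < 1 := (mul_lt_mul_iff_right₀ (by omega : (0:ℤ) < s)).mp
      (lt_of_le_of_lt st1 (by omega : rs + 0 < s * 1))
    have hB : B + 0 - qt + 1 < 1 := (mul_lt_mul_iff_right₀ (by omega : (0:ℤ) < t)).mp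
      (lt_of_le_of_lt st2 (by omega : rt + 0 < t * 1))
    omega
  have hC : C = 1 := by omega
  subst hC
  have hA : A + 1 - qs + 1 < 2 := (mul_lt_mul_iff_right₀ (by omega : (0:ℤ) < s)).mp
    (lt_of_le_of_lt st1 (by omega : rs + 1 < s * 2))
  have hB : B + 1 - qt + 1 < 2 := (mul_lt_mul_iff_right₀ (by omega : (0:ℤ) < t)).mp
    (lt_of_le_of_lt st2 (by omega : rt + 1 < t * 2))
  have hA' : A = qs - 1 := by omega
  have hB' : B = qt - 1 := by omega
  subst hA' hB'
  rw [show ((qs - 1) + 1 - qs + 1 : ℤ) = 1 by ring, mul_one] at st1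
  rw [show ((qt - 1) + 1 - qt + 1 : ℤ) = 1 by ring, mul_one] at st2
  exact ⟨by omega, by omega, rfl, rfl, rfl⟩

lemma boundC_bwd (s t r : ℤ) (hs : 2 ≤ s) (hst : s ≤ t) (htr : t ≤ r + 1)
    (hms : (r + 1) % s = s - 1) (hmt : (r + 1) % t = t - 1) :
    0 ≤ (r+1)/s - 1 ∧ 0 ≤ (r+1)/t - 1 ∧ 0 ≤ (1:ℤ) ∧
    s * ((r+1)/s - 1) + (s - 1) * 1 ≤ r + 1 - s ∧
    t * ((r+1)/t - 1) + (t - 1) * 1 ≤ r + 1 - t ∧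
    ((r+1)/s - 1) + ((r+1)/t - 1) + 1 = (r + 1) / s + (r + 1) / t - 1 := by
  set n := r + 1 with hn
  set qs := n / s with hqs
  set qt := n / t with hqt
  have es : s * qs + n % s = n := Int.mul_ediv_add_emod n s
  have et : t * qt + n % t = n := Int.mul_ediv_add_emod n t
  rw [hms] at es
  rw [hmt] at et
  have hqs1 : 1 ≤ qs := by
    by_contra hc
    push_neg at hc
    have : s * qs ≤ 0 := mul_nonpos_of_nonneg_of_nonpos (by omega) (by omega)
    omega
  have hqt1 : 1 ≤ qt := by
    by_contra hc
    push_neg at hc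
    have : t * qt ≤ 0 := mul_nonpos_of_nonneg_of_nonpos (by omega) (by omega)
    omega
  refine ⟨by omega, by omega, by norm_num, by nlinarith, by nlinarith, by ring⟩

/-- Lemma `boundC`: characterization of lattice points on the top slice of the polytope. -/
theorem boundC (s t r : ℤ) (hs : 2 ≤ s) (hst : s ≤ t) (htr : t ≤ r + 1) (ht3 : 3 ≤ t) :
    ({p : ℤ × ℤ × ℤ | 0 ≤ p.1 ∧ 0 ≤ p.2.1 ∧ 0 ≤ p.2.2 ∧
        s * p.1 + (s - 1) * p.2.2 ≤ r + 1 - s ∧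
        t * p.2.1 + (t - 1) * p.2.2 ≤ r + 1 - t ∧
        p.1 + p.2.1 + p.2.2 = (r + 1) / s + (r + 1) / t - 1}.Nonempty ↔
      (r + 1) % s = s - 1 ∧ (r + 1) % t = t - 1) ∧
    ((r + 1) % s = s - 1 ∧ (r + 1) % t = t - 1 →
      {p : ℤ × ℤ × ℤ | 0 ≤ p.1 ∧ 0 ≤ p.2.1 ∧ 0 ≤ p.2.2 ∧
        s * p.1 + (s - 1) * p.2.2 ≤ r + 1 - s ∧
        t * p.2.1 + (t - 1) * p.2.2 ≤ r + 1 - t ∧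
        p.1 + p.2.1 + p.2.2 = (r + 1) / s + (r + 1) / t - 1}
        = {((r + 1) / s - 1, (r + 1) / t - 1, 1)}) := by
  constructor
  · constructor
    · rintro ⟨⟨A, B, C⟩, h0A, h0B, h0C, h1, h2, h3⟩
      obtain ⟨hms, hmt, -⟩ := boundC_fwd s t r A B C hs hst htr ht3 h0A h0B h0C h1 h2 h3
      exact ⟨hms, hmt⟩
    · rintro ⟨hms, hmt⟩
      exact ⟨((r+1)/s - 1, (r+1)/t - 1, 1), boundC_bwd s t r hs hst htr hms hmt⟩
  · rintro ⟨hms, hmt⟩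
    ext ⟨A, B, C⟩
    constructor
    · rintro ⟨h0A, h0B, h0C, h1, h2, h3⟩
      obtain ⟨-, -, hA, hB, hC⟩ := boundC_fwd s t r A B C hs hst htr ht3 h0A h0B h0C h1 h2 h3
      simp [hA, hB, hC, Prod.ext_iff]
    · rintro h
      simp only [Set.mem_singleton_iff, Prod.ext_iff] at h
      obtain ⟨hA, hB, hC⟩ := h
      subst hA hB hC
      exact boundC_bwd s t r hs hst htr hms hmt
end

section
/- Let a₁ ≤ a₂ ≤ ... ≤ a_s be non-negative integers and let A, B, d be non-negative integers with A + B = d. Then B ≥ Σᵢ max(d - aᵢ, 0) if and only if jA + (j-1)B ≤ a₁ + ... + a_j for every j = 1, ..., s. -/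
lemma initialSeg_aux {s : ℕ} (T : Finset (Fin s))
    (hdc : ∀ i j : Fin s, i ≤ j → j ∈ T → i ∈ T) :
    T = Finset.univ.filter (fun i : Fin s => (i : ℕ) < T.card) := by
  ext i
  simp only [Finset.mem_filter, Finset.mem_univ, true_and]
  constructor
  · intro hi
    have hsub : Finset.Iic i ⊆ T := fun j hj => hdc j i (Finset.mem_Iic.mp hj) hi
    have := Finset.card_le_card hsub
    rw [Fin.card_Iic] at this
    omega
  · intro hi
    by_contra hiT
    have hsub : T ⊆ Finset.Iio i := by
      intro j hj
      rw [Finset.mem_Iio]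
      by_contra hji
      exact hiT (hdc i j (le_of_not_gt hji) hj)
    have := Finset.card_le_card hsub
    rw [Fin.card_Iio] at this
    omega

lemma card_filter_lt_aux (s j : ℕ) (hj : j ≤ s) :
    (Finset.univ.filter (fun i : Fin s => (i : ℕ) < j)).card = j := by
  have himg : (Finset.univ.filter (fun i : Fin s => (i : ℕ) < j)).image Fin.val
      = Finset.range j := by
    ext n
    simp only [Finset.mem_image, Finset.mem_filter, Finset.mem_univ, true_and,
      Finset.mem_range]
    constructor
    · rintro ⟨i, hi, rfl⟩; exact hi
    · intro hn; exact ⟨⟨n, lt_of_lt_of_le hn hj⟩, hn, rfl⟩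
  rw [← Finset.card_image_of_injective _ Fin.val_injective, himg, Finset.card_range]

lemma sum_sub_aux {s : ℕ} (a : Fin s → ℤ) (d : ℤ) (j : ℕ) (hj : j ≤ s) :
    ∑ i ∈ Finset.univ.filter (fun i : Fin s => (i : ℕ) < j), (d - a i)
      = (j : ℤ) * d - ∑ i ∈ Finset.univ.filter (fun i : Fin s => (i : ℕ) < j), a i := by
  rw [Finset.sum_sub_distrib, Finset.sum_const, card_filter_lt_aux s j hj, nsmul_eq_mul]

/-- Combinatorial core of Corollary `GeneralMonomialDescription`: for nonnegative integers
`a₁ ≤ … ≤ a_s` and `A + B = d`, one has `B ≥ Σᵢ max(d - aᵢ, 0)` iff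
`jA + (j-1)B ≤ a₁ + … + a_j` for every `j = 1, …, s`. -/
theorem general_monomial_description (s : ℕ) (a : Fin s → ℤ)
    (ha0 : ∀ i, 0 ≤ a i) (hmono : Monotone a)
    (A B d : ℤ) (hA : 0 ≤ A) (hB : 0 ≤ B) (hd : 0 ≤ d) (hAB : A + B = d) :
    (∑ i, max (d - a i) 0) ≤ B ↔
      ∀ j : ℕ, 1 ≤ j → j ≤ s →
        (j : ℤ) * A + ((j : ℤ) - 1) * B ≤ ∑ i ∈ Finset.univ.filter (fun i : Fin s => (i : ℕ) < j), a i := by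
  constructor
  · intro h j hj1 hjs
    have h1 : ∑ i ∈ Finset.univ.filter (fun i : Fin s => (i : ℕ) < j), (d - a i)
        ≤ ∑ i ∈ Finset.univ.filter (fun i : Fin s => (i : ℕ) < j), max (d - a i) 0 :=
      Finset.sum_le_sum fun i _ => le_max_left _ _
    have h2 : ∑ i ∈ Finset.univ.filter (fun i : Fin s => (i : ℕ) < j), max (d - a i) 0
        ≤ ∑ i, max (d - a i) 0 :=
      Finset.sum_le_sum_of_subset_of_nonneg (Finset.filter_subset _ _)
        (fun i _ _ => le_max_right _ _)
    rw [sum_sub_aux a d j hjs] at h1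
    nlinarith [h1.trans (h2.trans h)]
  · intro h
    set T := Finset.univ.filter (fun i : Fin s => 0 < d - a i) with hT
    have hdc : ∀ i j : Fin s, i ≤ j → j ∈ T → i ∈ T := by
      intro i j hij hj
      simp only [hT, Finset.mem_filter, Finset.mem_univ, true_and] at hj ⊢
      have := hmono hij
      omega
    have hks : T.card ≤ s := le_trans (Finset.card_le_card (Finset.subset_univ T))
      (by simp)
    have hsum : (∑ i, max (d - a i) 0) = ∑ i ∈ T, (d - a i) := by
      rw [← Finset.sum_filter_add_sum_filter_not Finset.univ (fun i => 0 < d - a i)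
        (fun i => max (d - a i) 0)]
      have h1 : ∑ i ∈ T, max (d - a i) 0 = ∑ i ∈ T, (d - a i) :=
        Finset.sum_congr rfl fun i hi => by
          simp only [hT, Finset.mem_filter] at hi
          exact max_eq_left hi.2.le
      have h2 : ∑ i ∈ Finset.univ.filter (fun i => ¬ 0 < d - a i), max (d - a i) 0 = 0 :=
        Finset.sum_eq_zero fun i hi => by
          simp only [Finset.mem_filter] at hi
          exact max_eq_right (by omega)
      simp only [hT] at h1 h2 ⊢
      rw [h1, h2, add_zero]
    rw [hsum, initialSeg_aux T hdc, sum_sub_aux a d T.card hks]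
    rcases Nat.eq_zero_or_pos T.card with hk | hk
    · simp [hk]; linarith
    · have := h T.card hk hks
      nlinarith
end

section
/- Let X = {[b₁:c₁],...,[b_s:c_s]} ⊂ ℙ¹ be distinct points with all bᵢ ≠ 0 and let a₁ ≤ ... ≤ a_s be non-negative integers. The Hilbert function of the power ideal J = ⟨(b₁x+c₁y)^{a₁+1},...,(b_sx+c_sy)^{a_s+1}⟩ ⊆ ℝ[x,y] in degree d is dim J_d = min{d+1, Σᵢ max(d - aᵢ, 0)}. -/
/-!
Dehomogenizing at `y = 1` identifies degree-`d` forms with `K[X]_(d+1)`, and turns `J_d` into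
`V = ∑ᵢ (X - tᵢ)^(aᵢ+1) · K[X]_(d - aᵢ)` with `tᵢ = -cᵢ/bᵢ`, so `dim V ≤ min (d+1) (∑ᵢ (d - aᵢ))`.
For the reverse inequality pair `K[X]` with itself by `⟨f, g⟩ = ∑ₚ (-1)ᵖ f⁽ᵖ⁾ g⁽ᵈ⁻ᵖ⁾`. On
polynomials of degree `≤ d` this sum has zero derivative, so it may be evaluated at any point;
evaluating at `tᵢ` shows that `g ⊥ (X - tᵢ)^(aᵢ+1) · K[X]_(d - aᵢ)` forces `g⁽ʲ⁾(tᵢ) = 0` for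
`j < d - aᵢ`. Hence `V^⊥ ∩ K[X]_(d+1)` consists of multiples of `∏ᵢ (X - tᵢ)^(d - aᵢ)` and has
dimension at most `d + 1 - ∑ᵢ (d - aᵢ)`.
-/

open Finset Module

namespace Submodule

variable {K M : Type*} [Field K] [AddCommGroup M] [Module K M]

theorem finrank_iSup_le_sum {ι : Type*} [Fintype ι] (U : ι → Submodule K M)
    [∀ i, FiniteDimensional K (U i)] : finrank K ↥(⨆ i, U i) ≤ ∑ i, finrank K (U i) := by
  classical
  rw [Submodule.iSup_eq_range_dfinsupp_lsum]
  exact (LinearMap.finrank_range_le _).trans (finrank_directSum K fun i ↦ U i).le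

theorem finrank_le_finrank_add_finrank_inf_orthogonalBilin {N : Type*}
    [AddCommGroup N] [Module K N] (B : M →ₗ[K] N →ₗ[K] K) (V : Submodule K M)
    (W : Submodule K N) [FiniteDimensional K V] [FiniteDimensional K W] :
    finrank K W ≤ finrank K V + finrank K ↥(W ⊓ V.orthogonalBilin B) := by
  set ψ : W →ₗ[K] Module.Dual K V := V.subtype.dualMap ∘ₗ B.flip ∘ₗ W.subtype
  have hker : (LinearMap.ker ψ).map W.subtype ≤ W ⊓ V.orthogonalBilin B := by
    rintro _ ⟨w, hw, rfl⟩
    refine ⟨w.2, fun v hv ↦ ?_⟩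
    simpa [ψ] using LinearMap.congr_fun hw ⟨v, hv⟩
  calc finrank K W = finrank K (LinearMap.range ψ) + finrank K (LinearMap.ker ψ) :=
        (LinearMap.finrank_range_add_finrank_ker ψ).symm
    _ ≤ finrank K V + finrank K ↥(W ⊓ V.orthogonalBilin B) := by
        gcongr
        · exact (Submodule.finrank_le _).trans Subspace.dual_finrank_eq.le
        · rw [← Submodule.finrank_map_subtype_eq]
          exact Submodule.finrank_mono hker

end Submodule

namespace Polynomial

theorem mul_mem_degreeLT {R : Type*} [Semiring R] {p h : R[X]} {n : ℕ}
    (hh : h ∈ R[X]_(n - p.natDegree)) : p * h ∈ R[X]_n := by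
  rcases eq_or_ne h 0 with rfl | h0
  · simp
  rw [mem_degreeLT, ← natDegree_lt_iff_degree_lt h0] at hh
  rw [mem_degreeLT]
  refine degree_le_natDegree.trans_lt ?_
  exact_mod_cast natDegree_mul_le.trans_lt (by omega)

section CommRing

variable {R : Type*} [CommRing R]

noncomputable def apolarPoly (d : ℕ) (f g : R[X]) : R[X] :=
  ∑ p ∈ range (d + 1), (-1) ^ p * (derivative^[p] f * derivative^[d - p] g)

theorem derivative_apolarPoly {d : ℕ} {f g : R[X]} (hf : f.natDegree ≤ d)
    (hg : g.natDegree ≤ d) : derivative (apolarPoly d f g) = 0 := by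
  set T : ℕ → R[X] := fun p ↦ (-1) ^ p * (derivative^[p] f * derivative^[d + 1 - p] g)
  have htelescope : ∀ p ∈ range (d + 1),
      derivative ((-1) ^ p * (derivative^[p] f * derivative^[d - p] g)) = T p - T (p + 1) := by
    intro p _
    have hdp : d + 1 - p = d - p + 1 := by grind
    simp only [T, hdp, Nat.add_sub_add_right, derivative_mul, derivative_pow, derivative_neg,
      derivative_one, Function.iterate_succ_apply', pow_succ]
    ring
  rw [apolarPoly, derivative_sum, sum_congr rfl htelescope, sum_range_sub']
  simp [T, iterate_derivative_eq_zero (Nat.lt_succ_of_le hf),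
    iterate_derivative_eq_zero (Nat.lt_succ_of_le hg)]

variable (R) in
noncomputable def apolarForm (d : ℕ) : R[X] →ₗ[R] R[X] →ₗ[R] R :=
  LinearMap.mk₂ R (fun f g ↦ (apolarPoly d f g).eval 0)
    (fun f₁ f₂ g ↦ by simp [apolarPoly, iterate_map_add, add_mul, mul_add, sum_add_distrib])
    (fun c f g ↦ by simp [apolarPoly, iterate_derivative_smul, ← smul_sum])
    (fun f g₁ g₂ ↦ by simp [apolarPoly, iterate_map_add, mul_add, sum_add_distrib])
    (fun c f g ↦ by simp [apolarPoly, iterate_derivative_smul, ← smul_sum])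

theorem apolarForm_apply_eq_eval [IsAddTorsionFree R] {d : ℕ} {f g : R[X]}
    (hf : f.natDegree ≤ d) (hg : g.natDegree ≤ d) (t : R) :
    apolarForm R d f g = (apolarPoly d f g).eval t := by
  show (apolarPoly d f g).eval 0 = _
  rw [eq_C_of_derivative_eq_zero (derivative_apolarPoly hf hg)]
  simp

theorem apolarForm_X_sub_C_pow [IsAddTorsionFree R] {d n : ℕ} (hn : n ≤ d) (t : R)
    {g : R[X]} (hg : g.natDegree ≤ d) :
    apolarForm R d ((X - C t) ^ n) g = (-1) ^ n * n.factorial * (derivative^[d - n] g).eval t := by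
  have hdeg : ((X - C t) ^ n).natDegree ≤ d :=
    (natDegree_pow_le_of_le n (natDegree_X_sub_C_le t)).trans (by simpa using hn)
  rw [apolarForm_apply_eq_eval hdeg hg t, apolarPoly, eval_finsetSum,
    sum_eq_single_of_mem n (mem_range.2 (Nat.lt_succ_of_le hn))]
  · simp [iterate_derivative_X_sub_pow_self, mul_assoc]
  · intro p _ hpn
    rcases lt_or_gt_of_ne hpn with h | h
    · simp [iterate_derivative_X_sub_pow, Nat.sub_ne_zero_of_lt h]
    · simp [iterate_derivative_X_sub_pow, Nat.descFactorial_eq_zero_iff_lt.2 h]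

theorem X_sub_C_pow_dvd_of_forall_apolarForm_eq_zero [IsDomain R] [CharZero R] {d m : ℕ}
    {t : R} {g : R[X]} (hg : g.natDegree ≤ d)
    (h : ∀ k < d + 1 - m, apolarForm R d ((X - C t) ^ (m + k)) g = 0) :
    (X - C t) ^ (d + 1 - m) ∣ g := by
  rcases eq_or_ne g 0 with rfl | hg0
  · exact dvd_zero _
  obtain hn | ⟨n, hn⟩ : d + 1 - m = 0 ∨ ∃ n, d + 1 - m = n + 1 :=
    (d + 1 - m).eq_zero_or_eq_succ_pred.imp_right fun h ↦ ⟨_, h⟩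
  · simp [hn]
  rw [hn, ← le_rootMultiplicity_iff hg0, Nat.succ_le_iff]
  refine lt_rootMultiplicity_of_isRoot_iterate_derivative_of_mem_nonZeroDivisors' hg0
    (fun j hj ↦ ?_) (fun j _ hj ↦ mem_nonZeroDivisors_of_ne_zero (Nat.cast_ne_zero.2 hj))
  have hk := h (n - j) (by omega)
  rw [apolarForm_X_sub_C_pow (by omega) t hg, show d - (m + (n - j)) = j by omega] at hk
  simpa [IsRoot, Nat.factorial_ne_zero] using hk

theorem mem_map_mulLeft_degreeLT_of_dvd [NoZeroDivisors R] {p g : R[X]} {n : ℕ} (hp : p ≠ 0)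
    (hg : g ∈ R[X]_n) (hpg : p ∣ g) : g ∈ (R[X]_(n - p.natDegree)).map (LinearMap.mulLeft R p) := by
  obtain ⟨u, rfl⟩ := hpg
  refine ⟨u, SetLike.mem_coe.2 ?_, rfl⟩
  rcases eq_or_ne u 0 with rfl | hu
  · exact zero_mem _
  rw [mem_degreeLT, ← natDegree_lt_iff_degree_lt (mul_ne_zero hp hu), natDegree_mul hp hu] at hg
  rw [mem_degreeLT, ← natDegree_lt_iff_degree_lt hu]
  omega

end CommRing

section Field

variable {K : Type*} [Field K]

theorem map_mulLeft_C_mul {u : K} (hu : u ≠ 0) (p : K[X]) (W : Submodule K K[X]) :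
    W.map (LinearMap.mulLeft K (C u * p)) = W.map (LinearMap.mulLeft K p) := by
  rw [show LinearMap.mulLeft K (C u * p) = u • LinearMap.mulLeft K p by ext; simp [C_mul'],
    Submodule.map_smul _ _ _ hu]

theorem finrank_degreeLT (n : ℕ) : finrank K K[X]_n = n := by
  simp [finrank_eq_card_basis (degreeLT.basis K n)]

end Field

section CharZero

variable {K : Type*} [Field K] [CharZero K] {ι : Type*} [Fintype ι] {t : ι → K}

theorem degreeLT_inf_orthogonalBilin_apolarForm_le (ht : Function.Injective t) (m : ι → ℕ)
    (d : ℕ) :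
    K[X]_(d + 1) ⊓ (⨆ i, (K[X]_(d + 1 - m i)).map
        (LinearMap.mulLeft K ((X - C (t i)) ^ m i))).orthogonalBilin (apolarForm K d) ≤
      (K[X]_(d + 1 - ∑ i, (d + 1 - m i))).map
        (LinearMap.mulLeft K (∏ i, (X - C (t i)) ^ (d + 1 - m i))) := by
  intro g hg
  obtain ⟨hg, hgV⟩ := Submodule.mem_inf.1 hg
  have hdeg : g.natDegree ≤ d := by
    rw [degreeLT_succ_eq_degreeLE, mem_degreeLE] at hg
    exact natDegree_le_iff_degree_le.2 hg
  have hdvd : ∏ i, (X - C (t i)) ^ (d + 1 - m i) ∣ g := prod_dvd_of_coprime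
    (fun i _ j _ hij ↦ (pairwise_coprime_X_sub_C ht hij).pow)
    fun i _ ↦ X_sub_C_pow_dvd_of_forall_apolarForm_eq_zero hdeg fun k hk ↦
      hgV _ (Submodule.mem_iSup_of_mem i
        ⟨(X - C (t i)) ^ k, by simpa [mem_degreeLT] using hk, by simp [pow_add]⟩)
  have hmonic : ∀ i ∈ univ, ((X - C (t i)) ^ (d + 1 - m i)).Monic :=
    fun i _ ↦ (monic_X_sub_C (t i)).pow _
  simpa [natDegree_prod_of_monic _ _ hmonic] using
    mem_map_mulLeft_degreeLT_of_dvd (monic_prod_of_monic _ _ hmonic).ne_zero hg hdvd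

theorem finrank_iSup_map_mulLeft_X_sub_C_pow_degreeLT (ht : Function.Injective t) (m : ι → ℕ)
    (d : ℕ) :
    finrank K ↥(⨆ i, (K[X]_(d + 1 - m i)).map (LinearMap.mulLeft K ((X - C (t i)) ^ m i))) =
      min (d + 1) (∑ i, (d + 1 - m i)) := by
  have horth := degreeLT_inf_orthogonalBilin_apolarForm_le ht m d
  set V := ⨆ i, (K[X]_(d + 1 - m i)).map (LinearMap.mulLeft K ((X - C (t i)) ^ m i))
  have hV : V ≤ K[X]_(d + 1) := iSup_le fun i ↦ by
    rintro _ ⟨h, hh, rfl⟩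
    exact mul_mem_degreeLT (by simpa using hh)
  have : FiniteDimensional K V := Submodule.finiteDimensional_of_le hV
  have hle_d : finrank K V ≤ d + 1 :=
    (Submodule.finrank_mono hV).trans (finrank_degreeLT _).le
  have hle_sum : finrank K V ≤ ∑ i, (d + 1 - m i) :=
    (Submodule.finrank_iSup_le_sum _).trans <| sum_le_sum fun i _ ↦
      (Submodule.finrank_map_le _ _).trans (finrank_degreeLT _).le
  have hlower := Submodule.finrank_le_finrank_add_finrank_inf_orthogonalBilin
    (apolarForm K d) V (K[X]_(d + 1))
  rw [finrank_degreeLT] at hlower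
  have hle_orth := (Submodule.finrank_mono horth).trans
    ((Submodule.finrank_map_le _ _).trans (finrank_degreeLT _).le)
  omega

end CharZero

end Polynomial

namespace MvPolynomial

open scoped Polynomial

open Polynomial (homogenize aeval_homogenize_X_one isHomogeneous_homogenize
  homogenize_eq_of_isHomogeneous)

attribute [local instance] gradedAlgebra in
theorem homogeneousComponent_mul_of_isHomogeneous {σ R : Type*} [CommSemiring R]
    {p q : MvPolynomial σ R} {m : ℕ} (hq : q.IsHomogeneous m) (n : ℕ) :
    homogeneousComponent n (p * q) = if m ≤ n then homogeneousComponent (n - m) p * q else 0 := by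
  rw [← decomposition.decompose'_apply, ← decomposition.decompose'_apply]
  exact DirectSum.coe_decompose_mul_of_right_mem (homogeneousSubmodule σ R) n hq

variable {R : Type*}

theorem natDegree_aeval_X_one_le [CommSemiring R] {q : MvPolynomial (Fin 2) R} {n : ℕ}
    (hq : q.IsHomogeneous n) : (aeval ![(Polynomial.X : R[X]), 1] q).natDegree ≤ n := by
  rw [q.as_sum, map_sum]
  refine Polynomial.natDegree_sum_le_of_forall_le _ _ fun ν hν ↦ ?_
  have hν : ν 0 + ν 1 = n := by
    simpa [Finsupp.weight_apply, Finsupp.sum_fintype, Fin.sum_univ_two] using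
      hq (mem_support_iff.1 hν)
  rw [aeval_monomial, Finsupp.prod_fintype _ _ (by simp), Fin.prod_univ_two]
  simp only [Matrix.cons_val_zero, Matrix.cons_val_one, one_pow, mul_one]
  exact (Polynomial.natDegree_C_mul_X_pow_le _ _).trans (by omega)

theorem map_aeval_X_one_ideal_span_inf_homogeneousSubmodule [CommSemiring R] {ι : Type*}
    [Fintype ι] {g : ι → MvPolynomial (Fin 2) R} {m : ι → ℕ}
    (hg : ∀ i, (g i).IsHomogeneous (m i)) (d : ℕ) :
    ((Ideal.span (Set.range g)).restrictScalars R ⊓ homogeneousSubmodule (Fin 2) R d).map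
        (aeval ![(Polynomial.X : R[X]), 1]).toLinearMap =
      ⨆ i, (R[X]_(d + 1 - m i)).map
        (LinearMap.mulLeft R (aeval ![(Polynomial.X : R[X]), 1] (g i))) := by
  apply le_antisymm
  · rintro _ ⟨f, hf, rfl⟩
    obtain ⟨hfJ, hfd⟩ := Submodule.mem_inf.1 hf
    obtain ⟨c, rfl⟩ := Ideal.mem_span_range_iff_exists_fun.1 hfJ
    rw [AlgHom.toLinearMap_apply, ← homogeneousComponent_eq_self hfd, map_sum, map_sum]
    refine Submodule.sum_mem _ fun i _ ↦ Submodule.mem_iSup_of_mem i ?_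
    rw [homogeneousComponent_mul_of_isHomogeneous (hg i)]
    split_ifs with hmd
    · refine ⟨aeval ![(Polynomial.X : R[X]), 1] (homogeneousComponent (d - m i) (c i)), ?_,
        by simp [mul_comm]⟩
      rw [SetLike.mem_coe, Polynomial.mem_degreeLT]
      refine Polynomial.degree_le_natDegree.trans_lt ?_
      exact_mod_cast (natDegree_aeval_X_one_le (homogeneousComponent_isHomogeneous _ _)).trans_lt
        (by omega)
    · simp
  · refine iSup_le fun i ↦ ?_
    rintro _ ⟨h, hh, rfl⟩
    rcases eq_or_ne h 0 with rfl | h0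
    · simp
    rw [SetLike.mem_coe, Polynomial.mem_degreeLT,
      ← Polynomial.natDegree_lt_iff_degree_lt h0] at hh
    refine ⟨homogenize h (d - m i) * g i, Submodule.mem_inf.2 ⟨?_, ?_⟩, ?_⟩
    · exact Ideal.mul_mem_left _ _ (Ideal.subset_span ⟨i, rfl⟩)
    · have := (isHomogeneous_homogenize (n := d - m i) h).mul (hg i)
      rwa [Nat.sub_add_cancel (by omega)] at this
    · simp [aeval_homogenize_X_one h (by omega : h.natDegree ≤ d - m i), mul_comm]

theorem finrank_map_aeval_X_one_of_le_homogeneousSubmodule [CommSemiring R] {d : ℕ}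
    {W : Submodule R (MvPolynomial (Fin 2) R)} (hW : W ≤ homogeneousSubmodule (Fin 2) R d) :
    finrank R ↥(W.map (aeval ![(Polynomial.X : R[X]), 1]).toLinearMap) = finrank R W := by
  have hinj : Function.Injective ((aeval ![(Polynomial.X : R[X]), 1]).toLinearMap ∘ₗ W.subtype) :=
    fun x y hxy ↦ Subtype.ext <| by
      rw [← homogenize_eq_of_isHomogeneous (hW x.2) rfl,
        ← homogenize_eq_of_isHomogeneous (hW y.2) rfl]
      exact congrArg (homogenize · d) hxy
  rw [← LinearMap.finrank_range_of_inj hinj, LinearMap.range_comp, Submodule.range_subtype]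

theorem map_aeval_X_one_span_linearForm_pow_inf_homogeneousSubmodule [Field R] {ι : Type*}
    [Fintype ι] {b : ι → R} (hb : ∀ i, b i ≠ 0) (c : ι → R) (m : ι → ℕ) (d : ℕ) :
    ((Ideal.span (Set.range fun i ↦ (C (b i) * X 0 + C (c i) * X 1) ^ m i)).restrictScalars R ⊓
        homogeneousSubmodule (Fin 2) R d).map (aeval ![(Polynomial.X : R[X]), 1]).toLinearMap =
      ⨆ i, (R[X]_(d + 1 - m i)).map
        (LinearMap.mulLeft R ((Polynomial.X - Polynomial.C (-c i / b i)) ^ m i)) := by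
  have hhom : ∀ i,
      ((C (b i) * X 0 + C (c i) * X 1 : MvPolynomial (Fin 2) R) ^ m i).IsHomogeneous (m i) :=
    fun i ↦ by
      simpa using ((isHomogeneous_C_mul_X (b i) 0).add (isHomogeneous_C_mul_X (c i) 1)).pow (m i)
  rw [map_aeval_X_one_ideal_span_inf_homogeneousSubmodule hhom]
  refine iSup_congr fun i ↦ ?_
  have hdehom : aeval ![(Polynomial.X : R[X]), 1] ((C (b i) * X 0 + C (c i) * X 1) ^ m i) =
      Polynomial.C (b i ^ m i) * (Polynomial.X - Polynomial.C (-c i / b i)) ^ m i := by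
    rw [Polynomial.C_pow, ← mul_pow]
    simp [mul_sub, ← Polynomial.C_mul, mul_div_cancel₀ _ (hb i)]
  rw [hdehom, Polynomial.map_mulLeft_C_mul (pow_ne_zero _ (hb i))]

end MvPolynomial

open MvPolynomial

theorem power_ideal_hilbert_function_general (s : ℕ) (b c : Fin s → ℝ)
    (hb : ∀ i, b i ≠ 0)
    (hdist : ∀ i j, i ≠ j → b i * c j ≠ b j * c i)
    (a : Fin s → ℕ) (d : ℕ) :
    Module.finrank ℝ
      ↥((Ideal.span {f : MvPolynomial (Fin 2) ℝ |
            ∃ i, f = (C (b i) * X 0 + C (c i) * X 1) ^ (a i + 1)}).restrictScalars ℝ ⊓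
          homogeneousSubmodule (Fin 2) ℝ d) =
      min (d + 1) (∑ i, (d - a i)) := by
  have ht : Function.Injective fun i ↦ -c i / b i := fun i j hij ↦ by
    by_contra hne
    refine hdist i j hne ?_
    simp only [neg_div, neg_inj, div_eq_div_iff (hb i) (hb j)] at hij
    linarith
  have hgens : {f : MvPolynomial (Fin 2) ℝ | ∃ i, f = (C (b i) * X 0 + C (c i) * X 1) ^ (a i + 1)} =
      Set.range fun i ↦ (C (b i) * X 0 + C (c i) * X 1) ^ (a i + 1) :=
    Set.ext fun _ ↦ exists_congr fun _ ↦ eq_comm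
  rw [hgens, ← finrank_map_aeval_X_one_of_le_homogeneousSubmodule inf_le_right,
    map_aeval_X_one_span_linearForm_pow_inf_homogeneousSubmodule hb c (a · + 1)]
  simpa using Polynomial.finrank_iSup_map_mulLeft_X_sub_C_pow_degreeLT ht (a · + 1) d

/-- Geramita–Schenck: Hilbert function of a power ideal of `s` distinct points of `ℙ¹`
(with nonvanishing `x`-coordinates) with multiplicities `a₁ ≤ … ≤ a_s`:
`dim J_d = min(d+1, Σᵢ max(d - aᵢ, 0))`. -/
theorem power_ideal_hilbert_function (s : ℕ) (b c : Fin s → ℝ)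
    (hb : ∀ i, b i ≠ 0)
    (hdist : ∀ i j, i ≠ j → b i * c j ≠ b j * c i)
    (a : Fin s → ℕ) (hmono : Monotone a) (d : ℕ) :
    Module.finrank ℝ
      ↥((Ideal.span {f : MvPolynomial (Fin 2) ℝ |
            ∃ i, f = (C (b i) * X 0 + C (c i) * X 1) ^ (a i + 1)}).restrictScalars ℝ ⊓
          homogeneousSubmodule (Fin 2) ℝ d) =
      min (d + 1) (∑ i, (d - a i)) :=
  power_ideal_hilbert_function_general s b c hb hdist a d
end

section
/- Let R = ℝ[x,y,z] with graded reverse lexicographic order. If I is a homogeneous ideal generated by polynomials in x and z only, and J is a homogeneous ideal generated by polynomials in y and z only, then In(I + J) = In(I) + In(J). -/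
open MvPolynomial

/-- Graded reverse lexicographic order on exponent vectors in three variables
`x = X 0 > y = X 1 > z = X 2`: `u ≺ v` iff `deg u < deg v`, or the degrees agree and at
the last index where `u` and `v` differ, `u` is bigger. -/
def GrevlexLt (u v : Fin 3 →₀ ℕ) : Prop :=
  (u.sum fun _ n => n) < (v.sum fun _ n => n) ∨
    ((u.sum fun _ n => n) = (v.sum fun _ n => n) ∧
      ∃ i, v i < u i ∧ ∀ j, i < j → u j = v j)

/-- `e` is the exponent of the grevlex-leading monomial of `f`. -/
def IsLeadExp (f : MvPolynomial (Fin 3) ℝ) (e : Fin 3 →₀ ℕ) : Prop :=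
  e ∈ f.support ∧ ∀ e' ∈ f.support, e' ≠ e → GrevlexLt e' e

/-- The initial ideal of `I` with respect to graded reverse lexicographic order:
the ideal generated by the leading monomials of the elements of `I`. -/
noncomputable def initialIdeal (I : Ideal (MvPolynomial (Fin 3) ℝ)) :
    Ideal (MvPolynomial (Fin 3) ℝ) :=
  Ideal.span {M | ∃ f ∈ I, ∃ e, IsLeadExp f e ∧ M = monomial e 1}

abbrev MvP := MvPolynomial (Fin 3) ℝ

def D (e : Fin 3 →₀ ℕ) : ℕ := e 0 + e 1 + e 2

lemma sum_eq_D (e : Fin 3 →₀ ℕ) : (e.sum fun _ n => n) = D e := by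
  rw [Finsupp.sum_fintype]
  · exact Fin.sum_univ_three e
  · intro _; rfl

lemma exp_ext {u v : Fin 3 →₀ ℕ} (h0 : u 0 = v 0) (h1 : u 1 = v 1) (h2 : u 2 = v 2) :
    u = v := by
  ext i; fin_cases i <;> assumption

lemma grevlex_iff {u v : Fin 3 →₀ ℕ} :
    GrevlexLt u v ↔ D u < D v ∨ (D u = D v ∧ (v 2 < u 2 ∨ (u 2 = v 2 ∧ v 1 < u 1))) := by
  unfold GrevlexLt
  rw [sum_eq_D, sum_eq_D]
  constructor
  · rintro (h | ⟨hd, i, hi, hj⟩)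
    · exact Or.inl h
    · right; refine ⟨hd, ?_⟩
      fin_cases i
      · have h1 : u 1 = v 1 := hj 1 (by decide)
        have h2 : u 2 = v 2 := hj 2 (by decide)
        have hi' : v 0 < u 0 := hi
        exfalso; unfold D at hd; omega
      · have h2 : u 2 = v 2 := hj 2 (by decide)
        have hi' : v 1 < u 1 := hi
        exact Or.inr ⟨h2, hi'⟩
      · have hi' : v 2 < u 2 := hi
        exact Or.inl hi'
  · rintro (h | ⟨hd, h2 | ⟨he, h1⟩⟩)
    · exact Or.inl h
    · refine Or.inr ⟨hd, 2, h2, fun j hj => absurd hj ?_⟩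
      have := j.isLt; rw [Fin.lt_def]; simp; omega
    · refine Or.inr ⟨hd, 1, h1, fun j hj => ?_⟩
      have hj2 : j = 2 := by
        have := j.isLt; rw [Fin.lt_def] at hj; apply Fin.ext; simp at hj ⊢; omega
      rw [hj2]; exact he

lemma grevlex_irrefl (u : Fin 3 →₀ ℕ) : ¬ GrevlexLt u u := by
  rw [grevlex_iff]; omega

lemma grevlex_asymm {u v : Fin 3 →₀ ℕ} (h : GrevlexLt u v) : ¬ GrevlexLt v u := by
  rw [grevlex_iff] at h ⊢; omega

lemma grevlex_trans {u v w : Fin 3 →₀ ℕ} (h1 : GrevlexLt u v) (h2 : GrevlexLt v w) :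
    GrevlexLt u w := by
  rw [grevlex_iff] at h1 h2 ⊢; omega

lemma grevlex_total {u v : Fin 3 →₀ ℕ} (h : u ≠ v) : GrevlexLt u v ∨ GrevlexLt v u := by
  have : ¬ (u 0 = v 0 ∧ u 1 = v 1 ∧ u 2 = v 2) := fun ⟨a, b, c⟩ => h (exp_ext a b c)
  rw [grevlex_iff, grevlex_iff]; unfold D at *; omega

lemma D_add (u v : Fin 3 →₀ ℕ) : D (u + v) = D u + D v := by
  unfold D; simp [Finsupp.add_apply]; ring

lemma grevlex_add_iff {d u v : Fin 3 →₀ ℕ} :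
    GrevlexLt (d + u) (d + v) ↔ GrevlexLt u v := by
  rw [grevlex_iff, grevlex_iff, D_add, D_add]
  simp only [Finsupp.add_apply]
  omega

def rnk (N : ℕ) (e : Fin 3 →₀ ℕ) : ℕ :=
  D e * (N + 1) ^ 2 + (N - e 2) * (N + 1) + (N - e 1)

lemma rnk_lt {N : ℕ} {u v : Fin 3 →₀ ℕ} (hu : D u ≤ N) (hv : D v ≤ N)
    (h : GrevlexLt u v) : rnk N u < rnk N v := by
  have hu2 : u 2 ≤ N := by unfold D at hu; omega
  have hu1 : u 1 ≤ N := by unfold D at hu; omega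
  have hv2 : v 2 ≤ N := by unfold D at hv; omega
  rw [grevlex_iff] at h
  unfold rnk
  rcases h with h | ⟨hd, h2 | ⟨he, h1⟩⟩
  · have b1 : (N - u 2) * (N + 1) + (N - u 1) < (N + 1) ^ 2 := by nlinarith [Nat.sub_le N (u 2), Nat.sub_le N (u 1)]
    have b2 : D u * (N+1)^2 + (N+1)^2 ≤ D v * (N+1)^2 := by nlinarith
    omega
  · rw [hd]
    have hs : N - u 2 < N - v 2 := by omega
    have b1 : (N - u 2) * (N + 1) + (N + 1) ≤ (N - v 2) * (N + 1) := by nlinarith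
    have b2 : N - u 1 ≤ N := Nat.sub_le _ _
    omega
  · rw [hd, he]; omega

lemma exists_isLeadExp {f : MvP} (hf : f ≠ 0) : ∃ e, IsLeadExp f e := by
  have hne : f.support.Nonempty := by
    rw [Finset.nonempty_iff_ne_empty]
    simpa [MvPolynomial.support_eq_empty] using hf
  obtain ⟨b0, hb0, hb0max⟩ := f.support.exists_max_image D hne
  set N := D b0 with hN
  obtain ⟨e, he, hemax⟩ := f.support.exists_max_image (rnk N) hne
  refine ⟨e, he, fun e' he' hne' => ?_⟩
  rcases grevlex_total hne' with h | h
  · exact h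
  · exact absurd (rnk_lt (hb0max e he) (hb0max e' he') h) (by have := hemax e' he'; omega)

lemma isLeadExp_unique {f : MvP} {e e' : Fin 3 →₀ ℕ}
    (h : IsLeadExp f e) (h' : IsLeadExp f e') : e = e' := by
  by_contra hne
  exact grevlex_asymm (h'.2 e h.1 hne) (h.2 e' h'.1 (Ne.symm hne))

open Classical in
noncomputable def comp (φ : (Fin 3 →₀ ℕ) → ℕ) (k : ℕ) (g : MvP) : MvP :=
  ∑ e ∈ g.support.filter (fun e => φ e = k), MvPolynomial.monomial e (MvPolynomial.coeff e g)

open MvPolynomial Classical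

lemma coeff_comp (φ : (Fin 3 →₀ ℕ) → ℕ) (k : ℕ) (g : MvP) (e : Fin 3 →₀ ℕ) :
    coeff e (comp φ k g) = if φ e = k then coeff e g else 0 := by
  rw [comp, coeff_sum]
  rw [Finset.sum_congr rfl (fun x _ => coeff_monomial e x (coeff x g))]
  rw [Finset.sum_ite_eq' (g.support.filter (fun e => φ e = k)) e (fun x => coeff x g)]
  simp only [Finset.mem_filter, mem_support_iff]
  split_ifs with h1 h2 h2 <;> simp_all

lemma mem_support_comp {φ k g e} :
    e ∈ (comp φ k g).support ↔ e ∈ g.support ∧ φ e = k := by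
  simp only [mem_support_iff, coeff_comp]
  split_ifs with h <;> simp_all

lemma comp_add (φ : (Fin 3 →₀ ℕ) → ℕ) (k : ℕ) (g h : MvP) :
    comp φ k (g + h) = comp φ k g + comp φ k h := by
  apply MvPolynomial.ext; intro e
  simp only [coeff_add, coeff_comp]
  split_ifs <;> simp

lemma comp_eq_self {φ k} {g : MvP} (h : ∀ e ∈ g.support, φ e = k) : comp φ k g = g := by
  apply MvPolynomial.ext; intro e
  rw [coeff_comp]
  split_ifs with hc
  · rfl
  · by_contra hc2
    exact hc (h e (by simpa [mem_support_iff] using fun h0 => hc2 h0.symm))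

lemma comp_eq_zero {φ k} {g : MvP} (h : ∀ e ∈ g.support, φ e ≠ k) : comp φ k g = 0 := by
  apply MvPolynomial.ext; intro e
  rw [coeff_comp]
  split_ifs with hc
  · by_cases he : e ∈ g.support
    · exact absurd hc (h e he)
    · simpa [mem_support_iff] using he
  · simp

lemma comp_monomial_mul {φ : (Fin 3 →₀ ℕ) → ℕ} (hφ : ∀ a b, φ (a + b) = φ a + φ b)
    (k : ℕ) (d : Fin 3 →₀ ℕ) (c : ℝ) (g : MvP) :
    comp φ k (monomial d c * g) =
      if φ d ≤ k then monomial d c * comp φ (k - φ d) g else 0 := by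
  apply MvPolynomial.ext; intro e
  by_cases hde : d ≤ e
  · have hsplit : φ e = φ d + φ (e - d) := by
      have := hφ d (e - d); rwa [add_tsub_cancel_of_le hde] at this
    by_cases hdk : φ d ≤ k
    · rw [if_pos hdk, coeff_comp, coeff_monomial_mul', if_pos hde,
        coeff_monomial_mul', if_pos hde, coeff_comp]
      by_cases h1 : φ e = k
      · rw [if_pos h1, if_pos (show φ (e - d) = k - φ d by omega)]
      · rw [if_neg h1, if_neg (show ¬ φ (e - d) = k - φ d by omega), mul_zero]
    · rw [if_neg hdk, coeff_comp, coeff_zero]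
      by_cases h1 : φ e = k
      · exfalso; omega
      · rw [if_neg h1]
  · by_cases hdk : φ d ≤ k
    · rw [if_pos hdk, coeff_comp, coeff_monomial_mul', if_neg hde,
        coeff_monomial_mul', if_neg hde, ite_self]
    · rw [if_neg hdk, coeff_comp, coeff_monomial_mul', if_neg hde, coeff_zero, ite_self]

lemma support_monomial_mul {d : Fin 3 →₀ ℕ} {c : ℝ} (hc : c ≠ 0) (p : MvP) (e : Fin 3 →₀ ℕ) :
    e ∈ (monomial d c * p).support ↔ d ≤ e ∧ e - d ∈ p.support := by
  simp only [mem_support_iff, coeff_monomial_mul']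
  split_ifs with h <;> simp_all

lemma exists_monomial_dvd {w : MvP} {d : Fin 3 →₀ ℕ} (h : ∀ e ∈ w.support, d ≤ e) :
    ∃ w', w = monomial d 1 * w' ∧ ∀ e, coeff e w' = coeff (d + e) w := by
  set w' : MvP := ∑ e ∈ w.support, monomial (e - d) (coeff e w) with hw'
  have hchar : ∀ a, coeff a w' = coeff (d + a) w := by
    intro a
    rw [hw', coeff_sum]
    have hcong : ∀ x ∈ w.support,
        coeff a (monomial (x - d) (coeff x w)) = if x = d + a then coeff x w else 0 := by
      intro x hx
      rw [coeff_monomial]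
      have hdx := h x hx
      by_cases h1 : x - d = a
      · rw [if_pos h1, if_pos (by rw [← h1, add_tsub_cancel_of_le hdx])]
      · rw [if_neg h1, if_neg (fun hh => h1 (by rw [hh, add_tsub_cancel_left]))]
    rw [Finset.sum_congr rfl hcong,
      Finset.sum_ite_eq' w.support (d + a) (fun x => coeff x w)]
    split_ifs with hmem
    · rfl
    · symm; rwa [← notMem_support_iff]
  refine ⟨w', ?_, hchar⟩
  apply MvPolynomial.ext; intro e
  rw [coeff_monomial_mul']
  split_ifs with hde
  · rw [one_mul, hchar, add_tsub_cancel_of_le hde]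
  · have h0 : coeff e w = 0 := by
      rw [← notMem_support_iff]; exact fun hmem => hde (h e hmem)
    simp [h0]

lemma single_add_sub_eq {i : Fin 3} {d : Fin 3 →₀ ℕ} {k : ℕ} (hk : d i ≤ k) :
    d + Finsupp.single i (k - d i) = Finsupp.single i k + (d - Finsupp.single i (d i)) := by
  ext j
  simp only [Finsupp.add_apply, Finsupp.tsub_apply, Finsupp.single_apply]
  by_cases hj : i = j
  · subst hj; simp; omega
  · simp [hj]

/-- Extraction of the `i`-th coordinate component of an element of a span whose
generators do not involve variable `i`. -/
lemma compA {S : Set MvP} {i : Fin 3} (hS : ∀ s ∈ S, ∀ e ∈ s.support, e i = 0) :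
    ∀ g ∈ Ideal.span S, ∀ k, ∃ p ∈ Ideal.span S, (∀ e ∈ p.support, e i = 0) ∧
      comp (fun e => e i) k g = monomial (Finsupp.single i k) 1 * p := by
  intro g hg
  set P : MvP → Prop := fun g => ∀ k, ∃ p ∈ Ideal.span S, (∀ e ∈ p.support, e i = 0) ∧
      comp (fun e => e i) k g = monomial (Finsupp.single i k) 1 * p with hP
  have hzero : P 0 := by
    intro k
    refine ⟨0, Ideal.zero_mem _, by simp, ?_⟩
    rw [comp_eq_zero (by simp), mul_zero]
  have hadd : ∀ a b : MvP, P a → P b → P (a + b) := by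
    intro a b ha hb k
    obtain ⟨p1, hp1, hs1, he1⟩ := ha k
    obtain ⟨p2, hp2, hs2, he2⟩ := hb k
    refine ⟨p1 + p2, Ideal.add_mem _ hp1 hp2, ?_, ?_⟩
    · intro e he
      rcases Finset.mem_union.mp (MvPolynomial.support_add he) with h | h
      · exact hs1 e h
      · exact hs2 e h
    · rw [comp_add, he1, he2, mul_add]
  show P g
  refine Submodule.span_induction (p := fun x _ => P x) ?_ hzero
    (fun x y _ _ hx hy => hadd x y hx hy) ?_ hg
  · -- generators
    intro s hs k
    rcases Nat.eq_zero_or_pos k with hk | hk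
    · subst hk
      refine ⟨s, Ideal.subset_span hs, hS s hs, ?_⟩
      rw [comp_eq_self (hS s hs), Finsupp.single_zero]
      simp
    · refine ⟨0, Ideal.zero_mem _, by simp, ?_⟩
      rw [comp_eq_zero (fun e he => by rw [hS s hs e he]; omega), mul_zero]
  · -- smul
    intro a x _ hx
    rw [smul_eq_mul, ← MvPolynomial.support_sum_monomial_coeff a, Finset.sum_mul]
    apply Finset.sum_induction _ P hadd hzero
    intro d hd k
    have hc : coeff d a ≠ 0 := mem_support_iff.mp hd
    have hφ : ∀ a b : Fin 3 →₀ ℕ, (a + b) i = a i + b i := fun a b => rfl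
    rw [comp_monomial_mul hφ]
    by_cases hdk : d i ≤ k
    · rw [if_pos hdk]
      obtain ⟨p0, hp0, hsp0, hep0⟩ := hx (k - d i)
      refine ⟨monomial (d - Finsupp.single i (d i)) (coeff d a) * p0,
        Ideal.mul_mem_left _ _ hp0, ?_, ?_⟩
      · intro e he
        rw [support_monomial_mul hc] at he
        obtain ⟨hle, hmem⟩ := he
        have : e = (d - Finsupp.single i (d i)) + (e - (d - Finsupp.single i (d i))) :=
          (add_tsub_cancel_of_le hle).symm
        rw [this, Finsupp.add_apply, hsp0 _ hmem]
        simp [Finsupp.tsub_apply, Finsupp.single_apply]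
      · rw [hep0, ← mul_assoc, ← mul_assoc, monomial_mul, monomial_mul,
          single_add_sub_eq hdk, mul_one, one_mul]
    · rw [if_neg hdk]
      refine ⟨0, Ideal.zero_mem _, by simp, by rw [mul_zero]⟩

/-- Homogeneous components of elements of a span of "homogeneous" generators. -/
lemma compD_mem {S : Set MvP} (hS : ∀ s ∈ S, ∃ n, ∀ e ∈ s.support, D e = n) :
    ∀ g ∈ Ideal.span S, ∀ N, comp D N g ∈ Ideal.span S := by
  intro g hg
  set P : MvP → Prop := fun g => ∀ N, comp D N g ∈ Ideal.span S with hP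
  have hzero : P 0 := fun N => by rw [comp_eq_zero (by simp)]; exact Ideal.zero_mem _
  have hadd : ∀ a b : MvP, P a → P b → P (a + b) := by
    intro a b ha hb N
    rw [comp_add]
    exact Ideal.add_mem _ (ha N) (hb N)
  show P g
  refine Submodule.span_induction (p := fun x _ => P x) ?_ hzero
    (fun x y _ _ hx hy => hadd x y hx hy) ?_ hg
  · intro s hs N
    obtain ⟨n, hn⟩ := hS s hs
    by_cases hNn : N = n
    · subst hNn
      rw [comp_eq_self hn]
      exact Ideal.subset_span hs
    · rw [comp_eq_zero (fun e he => by rw [hn e he]; exact Ne.symm hNn)]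
      exact Ideal.zero_mem _
  · intro a x _ hx
    rw [smul_eq_mul, ← MvPolynomial.support_sum_monomial_coeff a, Finset.sum_mul]
    apply Finset.sum_induction _ P hadd hzero
    intro d _ N
    rw [comp_monomial_mul D_add]
    by_cases hdN : D d ≤ N
    · rw [if_pos hdN]
      exact Ideal.mul_mem_left _ _ (hx (N - D d))
    · rw [if_neg hdN]
      exact Ideal.zero_mem _

lemma leadMono_mem {I : Ideal MvP} {f : MvP} {e : Fin 3 →₀ ℕ}
    (hf : f ∈ I) (he : IsLeadExp f e) : monomial e 1 ∈ initialIdeal I :=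
  Ideal.subset_span ⟨f, hf, e, he, rfl⟩

lemma initialIdeal_mono {I J : Ideal MvP} (h : I ≤ J) :
    initialIdeal I ≤ initialIdeal J := by
  apply Ideal.span_mono
  rintro M ⟨f, hf, e, he, rfl⟩
  exact ⟨f, h hf, e, he, rfl⟩

lemma isLeadExp_add {g h : MvP} {Mg Mh : Fin 3 →₀ ℕ}
    (hg : IsLeadExp g Mg) (hh : IsLeadExp h Mh) (hlt : GrevlexLt Mh Mg) :
    IsLeadExp (g + h) Mg := by
  have hMgh : coeff Mg h = 0 := by
    by_contra hc
    have hmem : Mg ∈ h.support := mem_support_iff.mpr hc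
    by_cases he : Mg = Mh
    · exact grevlex_irrefl Mg (by nth_rewrite 1 [he]; exact hlt)
    · exact grevlex_asymm (hh.2 Mg hmem he) hlt
  constructor
  · rw [mem_support_iff, coeff_add, hMgh, add_zero]
    exact mem_support_iff.mp hg.1
  · intro e' he' hne
    rcases Finset.mem_union.mp (MvPolynomial.support_add he') with h1 | h1
    · exact hg.2 e' h1 hne
    · by_cases he2 : e' = Mh
      · rw [he2]; exact hlt
      · exact grevlex_trans (hh.2 e' h1 he2) hlt

def μ (n : ℕ) (e : Fin 3 →₀ ℕ) : ℕ := e 2 * (n + 1) + e 1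

lemma mu_bound {n : ℕ} {e : Fin 3 →₀ ℕ} (h : D e = n) : μ n e < (n + 1) ^ 2 := by
  have h2 : e 2 ≤ n := by unfold D at h; omega
  have h1 : e 1 ≤ n := by unfold D at h; omega
  unfold μ; nlinarith

lemma mu_step {n : ℕ} {M e : Fin 3 →₀ ℕ} (hM : D M = n) (he : D e = n)
    (h : GrevlexLt e M) : μ n M < μ n e := by
  rw [grevlex_iff] at h
  have hM1 : M 1 ≤ n := by unfold D at hM; omega
  unfold μ
  rcases h with h | ⟨_, h2 | ⟨h2, h1⟩⟩
  · omega
  · have : (M 2 + 1) * (n + 1) ≤ e 2 * (n + 1) := Nat.mul_le_mul_right _ (by omega)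
    nlinarith
  · rw [h2]; omega

lemma mem_support_sub {A B : MvP} {e : Fin 3 →₀ ℕ} (h : e ∈ (A - B).support) :
    e ∈ A.support ∪ B.support := by
  rw [Finset.mem_union]
  simp only [mem_support_iff, coeff_sub] at h ⊢
  by_contra hc
  push_neg at hc
  rw [hc.1, hc.2, sub_zero] at h
  exact h rfl

lemma mem_support_C_mul {c : ℝ} (hc : c ≠ 0) {f : MvP} {e : Fin 3 →₀ ℕ} :
    e ∈ (C c * f).support ↔ e ∈ f.support := by
  simp [mem_support_iff, coeff_C_mul, hc]

lemma isLeadExp_C_mul {c : ℝ} (hc : c ≠ 0) {f : MvP} {e : Fin 3 →₀ ℕ}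
    (h : IsLeadExp f e) : IsLeadExp (C c * f) e := by
  refine ⟨(mem_support_C_mul hc).mpr h.1, fun e' he' hne =>
    h.2 e' ((mem_support_C_mul hc).mp he') hne⟩

lemma le_self_add_f (u e : Fin 3 →₀ ℕ) : u ≤ u + e := by
  rw [Finsupp.le_def]; intro j; simp

lemma coeff_shift (u e : Fin 3 →₀ ℕ) (p : MvP) :
    coeff (u + e) (monomial u 1 * p) = coeff e p := by
  rw [coeff_monomial_mul', if_pos (le_self_add_f u e), add_tsub_cancel_left, one_mul]

lemma main_lemma {S T : Set MvP} (hS : ∀ s ∈ S, ∀ e ∈ s.support, e 1 = 0)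
    (hT : ∀ t ∈ T, ∀ e ∈ t.support, e 0 = 0) (n : ℕ) :
    ∀ K : ℕ, ∀ g h : MvP, g ∈ Ideal.span S → h ∈ Ideal.span T →
      (∀ e ∈ g.support, D e = n) → (∀ e ∈ h.support, D e = n) →
      (∀ e ∈ g.support ∪ h.support, (n + 1) ^ 2 ≤ μ n e + K) →
      ∀ e : Fin 3 →₀ ℕ, IsLeadExp (g + h) e →
      monomial e 1 ∈ initialIdeal (Ideal.span S) + initialIdeal (Ideal.span T) := by
  intro K
  induction K with
  | zero =>
    intro g h _ _ hgn hhn hK e he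
    exfalso
    have hg0 : g = 0 := by
      by_contra h0
      obtain ⟨e0, he0⟩ := exists_isLeadExp h0
      have h1 := hK e0 (Finset.mem_union_left _ he0.1)
      have h2 := mu_bound (hgn e0 he0.1)
      linarith
    have hh0 : h = 0 := by
      by_contra h0
      obtain ⟨e0, he0⟩ := exists_isLeadExp h0
      have h1 := hK e0 (Finset.mem_union_right _ he0.1)
      have h2 := mu_bound (hhn e0 he0.1)
      linarith
    rw [hg0, hh0, add_zero] at he
    simpa using he.1
  | succ K ih =>
    intro g h hgI hhJ hgn hhn hK e he
    rw [Submodule.add_eq_sup]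
    by_cases hg0 : g = 0
    · apply Submodule.mem_sup_right
      apply leadMono_mem hhJ
      rwa [hg0, zero_add] at he
    by_cases hh0 : h = 0
    · apply Submodule.mem_sup_left
      apply leadMono_mem hgI
      rwa [hh0, add_zero] at he
    obtain ⟨Mg, hMg⟩ := exists_isLeadExp hg0
    obtain ⟨Mh, hMh⟩ := exists_isLeadExp hh0
    by_cases hMM : Mg = Mh
    case neg =>
      rcases grevlex_total hMM with hlt | hlt
      · have hL : IsLeadExp (g + h) Mh := by
          rw [add_comm g h]; exact isLeadExp_add hMh hMg hlt
        rw [isLeadExp_unique he hL]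
        exact Submodule.mem_sup_right (leadMono_mem hhJ hMh)
      · have hL : IsLeadExp (g + h) Mg := isLeadExp_add hMg hMh hlt
        rw [isLeadExp_unique he hL]
        exact Submodule.mem_sup_left (leadMono_mem hgI hMg)
    case pos =>
      rw [← hMM] at hMh
      set M := Mg with hMdef
      by_cases hcan : coeff M g + coeff M h = 0
      case neg =>
        have hL : IsLeadExp (g + h) M := by
          refine ⟨by rw [mem_support_iff, coeff_add]; exact hcan, fun e' he' hne => ?_⟩
          rcases Finset.mem_union.mp (MvPolynomial.support_add he') with h1 | h1
          · exact hMg.2 e' h1 hne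
          · exact hMh.2 e' h1 hne
        rw [isLeadExp_unique he hL]
        exact Submodule.mem_sup_left (leadMono_mem hgI hMg)
      case pos =>
        have hDM : D M = n := hgn M hMg.1
        set a := M 0 with ha
        set b := M 1 with hb
        set c := M 2 with hc
        set u : Fin 3 →₀ ℕ := Finsupp.single 1 b with hu
        set v : Fin 3 →₀ ℕ := Finsupp.single 0 a with hv
        set s : Fin 3 →₀ ℕ := Finsupp.single 2 c with hs
        obtain ⟨p, hpS, hp1, hpeq⟩ := compA hS g hgI b
        obtain ⟨q, hqT, hq0, hqeq⟩ := compA hT h hhJ a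
        have huM : u ≤ M := by
          rw [Finsupp.le_def]; intro j
          fin_cases j <;> simp [hu, hb, Finsupp.single_apply]
        have hvM : v ≤ M := by
          rw [Finsupp.le_def]; intro j
          fin_cases j <;> simp [hv, ha, Finsupp.single_apply]
        set E := M - u with hE
        set F := M - v with hF
        have hME : u + E = M := add_tsub_cancel_of_le huM
        have hMF : v + F = M := add_tsub_cancel_of_le hvM
        have hE1 : E 1 = 0 := by
          rw [hE]; simp [hu, hb, Finsupp.tsub_apply, Finsupp.single_apply]
        have hF0 : F 0 = 0 := by
          rw [hF]; simp [hv, ha, Finsupp.tsub_apply, Finsupp.single_apply]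
        have hcp : ∀ e', e' 1 = 0 → coeff e' p = coeff (u + e') g := by
          intro e' h1
          rw [← coeff_shift u e' p, ← hpeq, coeff_comp, if_pos]
          simp [Finsupp.add_apply, hu, hb, Finsupp.single_apply, h1]
        have hcq : ∀ e', e' 0 = 0 → coeff e' q = coeff (v + e') h := by
          intro e' h1
          rw [← coeff_shift v e' q, ← hqeq, coeff_comp, if_pos]
          simp [Finsupp.add_apply, hv, ha, Finsupp.single_apply, h1]
        have hcpE : coeff E p = coeff M g := by rw [hcp E hE1, hME]
        have hcqF : coeff F q = coeff M h := by rw [hcq F hF0, hMF]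
        have hlg : coeff M g ≠ 0 := mem_support_iff.mp hMg.1
        have hlh : coeff M h ≠ 0 := mem_support_iff.mp hMh.1
        -- support facts for p
        have hpsupp : ∀ e' ∈ p.support, (u + e') ∈ g.support := by
          intro e' he'
          rw [mem_support_iff, ← hcp e' (hp1 e' he')]
          exact mem_support_iff.mp he'
        have hDu : D u = b := by simp [hu, D, Finsupp.single_apply]
        have hDv : D v = a := by simp [hv, D, Finsupp.single_apply]
        have hDs : D s = c := by simp [hs, D, Finsupp.single_apply]
        have hpd : ∀ e' ∈ p.support, b + D e' = n := by
          intro e' he'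
          have h2 := hgn _ (hpsupp e' he')
          rw [D_add, hDu] at h2
          exact h2
        have hqsupp : ∀ e' ∈ q.support, (v + e') ∈ h.support := by
          intro e' he'
          rw [mem_support_iff, ← hcq e' (hq0 e' he')]
          exact mem_support_iff.mp he'
        have hqd : ∀ e' ∈ q.support, a + D e' = n := by
          intro e' he'
          have h2 := hhn _ (hqsupp e' he')
          rw [D_add, hDv] at h2
          exact h2
        have hplt : ∀ e' ∈ p.support, e' ≠ E → GrevlexLt e' E := by
          intro e' he' hne
          have hmem := hpsupp e' he'
          have hne2 : u + e' ≠ M := by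
            intro hh2
            exact hne (by rw [hE, ← hh2, add_tsub_cancel_left])
          have h3 := hMg.2 _ hmem hne2
          rw [← hME] at h3
          exact grevlex_add_iff.mp h3
        have hqlt : ∀ e' ∈ q.support, e' ≠ F → GrevlexLt e' F := by
          intro e' he' hne
          have hmem := hqsupp e' he'
          have hne2 : v + e' ≠ M := by
            intro hh2
            exact hne (by rw [hF, ← hh2, add_tsub_cancel_left])
          have h3 := hMh.2 _ hmem hne2
          rw [← hMF] at h3
          exact grevlex_add_iff.mp h3
        have hpz : ∀ e' ∈ p.support, c ≤ e' 2 := by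
          intro e' he'
          have hmem := hpsupp e' he'
          have hup2 : (u + e') 2 = e' 2 := by
            simp [Finsupp.add_apply, hu, Finsupp.single_apply]
          by_cases hne : u + e' = M
          · have h2 : (u + e') 2 = M 2 := by rw [hne]
            omega
          · have hlt2 := hMg.2 _ hmem hne
            rw [grevlex_iff] at hlt2
            have hDue : D (u + e') = n := hgn _ hmem
            omega
        have hqz : ∀ e' ∈ q.support, c ≤ e' 2 := by
          intro e' he'
          have hmem := hqsupp e' he'
          have hup2 : (v + e') 2 = e' 2 := by
            simp [Finsupp.add_apply, hv, Finsupp.single_apply]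
          by_cases hne : v + e' = M
          · have h2 : (v + e') 2 = M 2 := by rw [hne]
            omega
          · have hlt2 := hMh.2 _ hmem hne
            rw [grevlex_iff] at hlt2
            have hDue : D (v + e') = n := hhn _ hmem
            omega
        -- truncated tails
        set pt := p - monomial E (coeff M g) with hptdef
        set qt := q - monomial F (coeff M h) with hqtdef
        have hptsupp : ∀ e' ∈ pt.support, e' ∈ p.support ∧ e' ≠ E := by
          intro e' he'
          by_cases hne : e' = E
          · exfalso
            apply mem_support_iff.mp he'
            rw [hne, hptdef, coeff_sub, coeff_monomial, if_pos rfl, hcpE, sub_self]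
          · refine ⟨?_, hne⟩
            rw [mem_support_iff] at he' ⊢
            rw [hptdef, coeff_sub, coeff_monomial, if_neg (Ne.symm hne), sub_zero] at he'
            exact he'
        have hqtsupp : ∀ e' ∈ qt.support, e' ∈ q.support ∧ e' ≠ F := by
          intro e' he'
          by_cases hne : e' = F
          · exfalso
            apply mem_support_iff.mp he'
            rw [hne, hqtdef, coeff_sub, coeff_monomial, if_pos rfl, hcqF, sub_self]
          · refine ⟨?_, hne⟩
            rw [mem_support_iff] at he' ⊢
            rw [hqtdef, coeff_sub, coeff_monomial, if_neg (Ne.symm hne), sub_zero] at he'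
            exact he'
        have hdivp : ∀ e' ∈ pt.support, s ≤ e' := by
          intro e' he'
          obtain ⟨hmem, _⟩ := hptsupp e' he'
          rw [Finsupp.le_def]; intro j
          have h2 := hpz e' hmem
          fin_cases j <;> simp [hs, hc, Finsupp.single_apply] <;> omega
        have hdivq : ∀ e' ∈ qt.support, s ≤ e' := by
          intro e' he'
          obtain ⟨hmem, _⟩ := hqtsupp e' he'
          rw [Finsupp.le_def]; intro j
          have h2 := hqz e' hmem
          fin_cases j <;> simp [hs, hc, Finsupp.single_apply] <;> omega
        obtain ⟨Pt, hPt, hPtc⟩ := exists_monomial_dvd hdivp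
        obtain ⟨Qt, hQt, hQtc⟩ := exists_monomial_dvd hdivq
        -- exponent identities
        have hsu : s + u = F := by
          rw [hF]; ext j
          fin_cases j <;>
            simp [hs, hu, hv, ha, hb, hc, Finsupp.single_apply, Finsupp.tsub_apply,
              Finsupp.add_apply]
        have hsv : s + v = E := by
          rw [hE]; ext j
          fin_cases j <;>
            simp [hs, hu, hv, ha, hb, hc, Finsupp.single_apply, Finsupp.tsub_apply,
              Finsupp.add_apply]
        have hsuv : ∀ j, s j + u j + v j = M j := by
          intro j
          fin_cases j <;> simp [hs, hu, hv, ha, hb, hc, Finsupp.single_apply]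
        have hFE : F + E = s + M := by
          ext j
          have h1j := Finsupp.le_def.mp huM j
          have h2j := Finsupp.le_def.mp hvM j
          have h3j := hsuv j
          rw [Finsupp.add_apply, Finsupp.add_apply, hE, hF, Finsupp.tsub_apply,
            Finsupp.tsub_apply]
          omega
        have hs0 : (monomial s 1 : MvP) ≠ 0 := by
          rw [Ne, MvPolynomial.monomial_eq_zero]; exact one_ne_zero
        have hgMh : coeff M g = - coeff M h := eq_neg_of_add_eq_zero_left hcan
        have key : C (coeff M h) * (monomial u 1 * p) + C (coeff M h) * (monomial v 1 * q)
            = Pt * q - Qt * p := by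
          apply mul_left_cancel₀ hs0
          calc monomial s 1 *
                (C (coeff M h) * (monomial u 1 * p) + C (coeff M h) * (monomial v 1 * q))
              = C (coeff M h) * ((monomial s 1 * monomial u 1) * p)
                + C (coeff M h) * ((monomial s 1 * monomial v 1) * q) := by ring
            _ = C (coeff M h) * (monomial F 1 * p) + C (coeff M h) * (monomial E 1 * q) := by
                rw [monomial_mul, monomial_mul, one_mul, hsu, hsv]
            _ = monomial F (coeff M h) * p + monomial E (coeff M h) * q := by
                rw [← mul_assoc, ← mul_assoc, C_mul_monomial, C_mul_monomial, mul_one]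
            _ = pt * q - qt * p := by
                rw [hptdef, hqtdef, hgMh, map_neg]
                ring
            _ = (monomial s 1 * Pt) * q - (monomial s 1 * Qt) * p := by rw [← hPt, ← hQt]
            _ = monomial s 1 * (Pt * q - Qt * p) := by ring
        set g' := C (coeff M h) * (g - monomial u 1 * p) - Qt * p with hg'def
        set h' := C (coeff M h) * (h - monomial v 1 * q) + Pt * q with hh'def
        have hsum : g' + h' = C (coeff M h) * (g + h) := by
          rw [hg'def, hh'def]
          linear_combination -key
        have hg'I : g' ∈ Ideal.span S := by
          apply Ideal.sub_mem
          · exact Ideal.mul_mem_left _ _ (Ideal.sub_mem _ hgI (Ideal.mul_mem_left _ _ hpS))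
          · exact Ideal.mul_mem_left _ _ hpS
        have hh'J : h' ∈ Ideal.span T := by
          apply Ideal.add_mem
          · exact Ideal.mul_mem_left _ _ (Ideal.sub_mem _ hhJ (Ideal.mul_mem_left _ _ hqT))
          · exact Ideal.mul_mem_left _ _ hqT
        have hgcomp : ∀ e' ∈ (g - monomial u 1 * p).support, e' ∈ g.support ∧ e' 1 ≠ b := by
          intro e' he'
          rw [mem_support_iff, ← hpeq, coeff_sub, coeff_comp] at he'
          by_cases h1 : e' 1 = b
          · simp [h1] at he'
          · constructor
            · rw [mem_support_iff]; simpa [h1] using he'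
            · exact h1
        have hhcomp : ∀ e' ∈ (h - monomial v 1 * q).support, e' ∈ h.support ∧ e' 0 ≠ a := by
          intro e' he'
          rw [mem_support_iff, ← hqeq, coeff_sub, coeff_comp] at he'
          by_cases h1 : e' 0 = a
          · simp [h1] at he'
          · constructor
            · rw [mem_support_iff]; simpa [h1] using he'
            · exact h1
        have habc : a + b + c = n := hDM
        have hg'supp : ∀ e' ∈ g'.support, D e' = n ∧ GrevlexLt e' M := by
          intro e' he'
          rw [hg'def] at he'
          rcases Finset.mem_union.mp (mem_support_sub he') with h1 | h1
          · have h2 := (mem_support_C_mul hlh).mp h1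
            obtain ⟨h3, h4⟩ := hgcomp e' h2
            refine ⟨hgn e' h3, hMg.2 e' h3 fun hh2 => h4 (by rw [hh2])⟩
          · obtain ⟨e1, he1, e2, he2, hsum12⟩ := Finset.mem_add.mp (MvPolynomial.support_mul _ _ h1)
            have hq1 : (s + e1) ∈ qt.support := by
              rw [mem_support_iff, ← hQtc]
              exact mem_support_iff.mp he1
            obtain ⟨hq2, hq3⟩ := hqtsupp _ hq1
            have hlt1 : GrevlexLt (s + e1) F := hqlt _ hq2 hq3
            have hd1 : a + D (s + e1) = n := hqd _ hq2
            have hd2 : b + D e2 = n := hpd _ he2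
            rw [D_add, hDs] at hd1
            constructor
            · rw [← hsum12, D_add]; omega
            · have step1 : GrevlexLt (e2 + (s + e1)) (e2 + F) := grevlex_add_iff.mpr hlt1
              have step2 : GrevlexLt (s + e') (s + M) := by
                rw [← hsum12]
                have heq1 : s + (e1 + e2) = e2 + (s + e1) := by
                  ext j; simp only [Finsupp.add_apply]; ring
                rw [heq1]
                by_cases he2E : e2 = E
                · rw [he2E, ← hFE, add_comm F E]
                  exact grevlex_add_iff.mpr hlt1
                · have step15 : GrevlexLt (e2 + F) (E + F) := by
                    rw [add_comm e2 F, add_comm E F]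
                    exact grevlex_add_iff.mpr (hplt e2 he2 he2E)
                  have h6 := grevlex_trans step1 step15
                  rwa [add_comm E F, hFE] at h6
              exact grevlex_add_iff.mp step2
        have hh'supp : ∀ e' ∈ h'.support, D e' = n ∧ GrevlexLt e' M := by
          intro e' he'
          rw [hh'def] at he'
          rcases Finset.mem_union.mp (MvPolynomial.support_add he') with h1 | h1
          · have h2 := (mem_support_C_mul hlh).mp h1
            obtain ⟨h3, h4⟩ := hhcomp e' h2
            refine ⟨hhn e' h3, hMh.2 e' h3 fun hh2 => h4 (by rw [hh2])⟩
          · obtain ⟨e1, he1, e2, he2, hsum12⟩ := Finset.mem_add.mp (MvPolynomial.support_mul _ _ h1)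
            have hp1' : (s + e1) ∈ pt.support := by
              rw [mem_support_iff, ← hPtc]
              exact mem_support_iff.mp he1
            obtain ⟨hp2, hp3⟩ := hptsupp _ hp1'
            have hlt1 : GrevlexLt (s + e1) E := hplt _ hp2 hp3
            have hd1 : b + D (s + e1) = n := hpd _ hp2
            have hd2 : a + D e2 = n := hqd _ he2
            rw [D_add, hDs] at hd1
            constructor
            · rw [← hsum12, D_add]; omega
            · have step1 : GrevlexLt (e2 + (s + e1)) (e2 + E) := grevlex_add_iff.mpr hlt1
              have step2 : GrevlexLt (s + e') (s + M) := by
                rw [← hsum12]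
                have heq1 : s + (e1 + e2) = e2 + (s + e1) := by
                  ext j; simp only [Finsupp.add_apply]; ring
                rw [heq1]
                by_cases he2F : e2 = F
                · rw [he2F, ← hFE]
                  exact grevlex_add_iff.mpr hlt1
                · have step15 : GrevlexLt (e2 + E) (F + E) := by
                    rw [add_comm e2 E, add_comm F E]
                    exact grevlex_add_iff.mpr (hqlt e2 he2 he2F)
                  have h6 := grevlex_trans step1 step15
                  rwa [hFE] at h6
              exact grevlex_add_iff.mp step2
        have hg'n : ∀ e' ∈ g'.support, D e' = n := fun e' h1 => (hg'supp e' h1).1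
        have hh'n : ∀ e' ∈ h'.support, D e' = n := fun e' h1 => (hh'supp e' h1).1
        have hK' : ∀ e' ∈ g'.support ∪ h'.support, (n + 1) ^ 2 ≤ μ n e' + K := by
          intro e' he'
          have hMK := hK M (Finset.mem_union_left _ hMg.1)
          have hfacts : D e' = n ∧ GrevlexLt e' M := by
            rcases Finset.mem_union.mp he' with h1 | h1
            · exact hg'supp e' h1
            · exact hh'supp e' h1
          have h7 := mu_step hDM hfacts.1 hfacts.2
          linarith
        have he'' : IsLeadExp (g' + h') e := by
          rw [hsum]
          exact isLeadExp_C_mul hlh he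
        have hfin := ih g' h' hg'I hh'J hg'n hh'n hK' e he''
        rwa [Submodule.add_eq_sup] at hfin

lemma homog_supp {f : MvP} (hf : ∃ n, f.IsHomogeneous n) :
    ∃ n, ∀ e ∈ f.support, D e = n := by
  obtain ⟨n, hn⟩ := hf
  refine ⟨n, fun e he => ?_⟩
  have h1 := hn (mem_support_iff.mp he)
  have h2 : (Finsupp.weight 1) e = e.sum fun _ c => c := by
    rw [Finsupp.weight_apply]; simp [Finsupp.sum]
  rw [← sum_eq_D]
  rw [h2] at h1
  exact h1


/-- Lemma `general_fact_revlex`: if `I` is a homogeneous ideal of `ℝ[x,y,z]` generated by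
polynomials in `x, z` only and `J` is a homogeneous ideal generated by polynomials in
`y, z` only, then `In(I + J) = In(I) + In(J)` for graded reverse lexicographic order. -/
theorem initial_of_sum (I J : Ideal (MvPolynomial (Fin 3) ℝ))
    (hI : ∃ S : Set (MvPolynomial (Fin 3) ℝ), I = Ideal.span S ∧
      ∀ f ∈ S, (∃ n, f.IsHomogeneous n) ∧ ∀ e ∈ f.support, e 1 = 0)
    (hJ : ∃ S : Set (MvPolynomial (Fin 3) ℝ), J = Ideal.span S ∧
      ∀ f ∈ S, (∃ n, f.IsHomogeneous n) ∧ ∀ e ∈ f.support, e 0 = 0) :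
    initialIdeal (I + J) = initialIdeal I + initialIdeal J := by
  obtain ⟨S, hSI, hSprop⟩ := hI
  obtain ⟨T, hTJ, hTprop⟩ := hJ
  subst hSI hTJ
  have hS1 : ∀ s ∈ S, ∀ e ∈ s.support, e 1 = 0 := fun s hs => (hSprop s hs).2
  have hT0 : ∀ t ∈ T, ∀ e ∈ t.support, e 0 = 0 := fun t ht => (hTprop t ht).2
  have hShom : ∀ s ∈ S, ∃ n, ∀ e ∈ s.support, D e = n :=
    fun s hs => homog_supp (hSprop s hs).1
  have hThom : ∀ t ∈ T, ∃ n, ∀ e ∈ t.support, D e = n :=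
    fun t ht => homog_supp (hTprop t ht).1
  have hUhom : ∀ s ∈ S ∪ T, ∃ n, ∀ e ∈ s.support, D e = n := by
    intro s hs
    rcases hs with hs | hs
    · exact hShom s hs
    · exact hThom s hs
  have hsum : Ideal.span S + Ideal.span T = Ideal.span (S ∪ T) := by
    rw [Submodule.add_eq_sup, ← Ideal.span_union]
  apply le_antisymm
  · unfold initialIdeal
    refine Ideal.span_le.mpr ?_
    rintro _ ⟨f, hf, e, he, rfl⟩
    set N := D e with hN
    have hfN : comp D N f ∈ Ideal.span S + Ideal.span T := by
      rw [hsum] at hf ⊢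
      exact compD_mem hUhom f hf N
    have heN : IsLeadExp (comp D N f) e := by
      constructor
      · rw [mem_support_comp]; exact ⟨he.1, rfl⟩
      · intro e' he' hne
        exact he.2 e' (mem_support_comp.mp he').1 hne
    rw [Submodule.add_eq_sup] at hfN
    obtain ⟨g0, hg0, h0, hh0, hgh⟩ := Submodule.mem_sup.mp hfN
    have hgmem : comp D N g0 ∈ Ideal.span S := compD_mem hShom g0 hg0 N
    have hhmem : comp D N h0 ∈ Ideal.span T := compD_mem hThom h0 hh0 N
    have hghsum : comp D N g0 + comp D N h0 = comp D N f := by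
      rw [← comp_add, hgh, comp_eq_self]
      intro e' he'
      exact (mem_support_comp.mp he').2
    have hgn : ∀ e' ∈ (comp D N g0).support, D e' = N :=
      fun e' he' => (mem_support_comp.mp he').2
    have hhn : ∀ e' ∈ (comp D N h0).support, D e' = N :=
      fun e' he' => (mem_support_comp.mp he').2
    have hK0 : ∀ e' ∈ (comp D N g0).support ∪ (comp D N h0).support,
        (N + 1) ^ 2 ≤ μ N e' + (N + 1) ^ 2 := fun e' _ => Nat.le_add_left _ _
    have hmain := main_lemma hS1 hT0 N ((N + 1) ^ 2) (comp D N g0) (comp D N h0)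
      hgmem hhmem hgn hhn hK0 e (by rw [hghsum]; exact heN)
    exact hmain
  · have h1 : Ideal.span S ≤ Ideal.span S + Ideal.span T := by
      rw [Submodule.add_eq_sup]; exact le_sup_left
    have h2 : Ideal.span T ≤ Ideal.span S + Ideal.span T := by
      rw [Submodule.add_eq_sup]; exact le_sup_right
    rw [Submodule.add_eq_sup]
    exact sup_le (initialIdeal_mono h1) (initialIdeal_mono h2)
end

section
/- Let R = ℝ[x,y,z] with graded reverse lexicographic order, and let I, J be homogeneous ideals with I generated by polynomials in x, z only and J generated by polynomials in y, z only, such that In(I + J) = In(I) + In(J). Then In(I ∩ J) = In(I) ∩ In(J). -/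
open MvPolynomial

/-!
Initial ideals are monomial ideals, spanned by the upward closed set of leading exponents, so
it suffices to show that every common leading exponent `d` of `I` and `J` is one of `I ⊓ J`.
Take `f ∈ I` and `g ∈ J` with leading exponent `d`, scaled so that `f - g` has a smaller one.
Since `In (I + J) = In I + In J`, the leading exponent of `f - g` is that of some `h ∈ I` or
`h ∈ J`; subtracting a multiple of `h` from `f`, resp. adding one to `g`, lowers the leading
exponent of `f - g` without changing that of `f`. By well-foundedness this descent ends with
`f = g ∈ I ⊓ J`.
-/

open scoped MonomialOrder

namespace MvPolynomial

variable {σ R : Type*} [CommSemiring R]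

theorem mem_ideal_span_monomial_image_iff_support_subset {x : MvPolynomial σ R}
    {s : Set (σ →₀ ℕ)} (hs : IsUpperSet s) :
    x ∈ Ideal.span ((fun s => monomial s (1 : R)) '' s) ↔ ↑x.support ⊆ s := by
  rw [mem_ideal_span_monomial_image]
  exact ⟨fun h xi hxi => let ⟨_, hsi, hle⟩ := h xi hxi; hs hle hsi,
    fun h xi hxi => ⟨xi, h hxi, le_rfl⟩⟩

end MvPolynomial

namespace MonomialOrder

variable {σ : Type*} (m : MonomialOrder σ)

section CommSemiring

variable {R : Type*} [CommSemiring R]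

def leadingExponents (I : Ideal (MvPolynomial σ R)) : Set (σ →₀ ℕ) :=
  {d | ∃ f ∈ I, f ≠ 0 ∧ m.degree f = d}

noncomputable def initialIdeal (I : Ideal (MvPolynomial σ R)) : Ideal (MvPolynomial σ R) :=
  Ideal.span ((fun d => monomial d (1 : R)) '' m.leadingExponents I)

variable {m} [NoZeroDivisors R] {I J : Ideal (MvPolynomial σ R)}

theorem isUpperSet_leadingExponents (I : Ideal (MvPolynomial σ R)) :
    IsUpperSet (m.leadingExponents I) := by
  classical
  rintro d d' hle ⟨f, hf, hf0, rfl⟩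
  obtain _ | _ := subsingleton_or_nontrivial R
  · exact absurd (Subsingleton.elim f 0) hf0
  refine ⟨monomial (d' - m.degree f) 1 * f, I.mul_mem_left _ hf, mul_ne_zero (by simp) hf0, ?_⟩
  rw [m.degree_mul (by simp) hf0, m.degree_monomial, if_neg one_ne_zero,
    tsub_add_cancel_of_le hle]

theorem mem_initialIdeal_iff {p : MvPolynomial σ R} :
    p ∈ m.initialIdeal I ↔ ↑p.support ⊆ m.leadingExponents I :=
  mem_ideal_span_monomial_image_iff_support_subset (isUpperSet_leadingExponents I)

theorem mem_initialIdeal_sup_iff {p : MvPolynomial σ R} :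
    p ∈ m.initialIdeal I ⊔ m.initialIdeal J ↔
      ↑p.support ⊆ m.leadingExponents I ∪ m.leadingExponents J := by
  rw [initialIdeal, initialIdeal, ← Ideal.span_union, ← Set.image_union]
  exact mem_ideal_span_monomial_image_iff_support_subset
    ((isUpperSet_leadingExponents I).union (isUpperSet_leadingExponents J))

theorem mem_initialIdeal_inf_iff {p : MvPolynomial σ R} :
    p ∈ m.initialIdeal I ⊓ m.initialIdeal J ↔
      ↑p.support ⊆ m.leadingExponents I ∩ m.leadingExponents J := by
  rw [Submodule.mem_inf, mem_initialIdeal_iff, mem_initialIdeal_iff, Set.subset_inter_iff]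

theorem leadingExponents_sup_subset [Nontrivial R]
    (h : m.initialIdeal (I ⊔ J) = m.initialIdeal I ⊔ m.initialIdeal J) :
    m.leadingExponents (I ⊔ J) ⊆ m.leadingExponents I ∪ m.leadingExponents J := by
  intro d hd
  have hsupp : ↑(monomial d (1 : R)).support = ({d} : Set (σ →₀ ℕ)) := by
    classical simp [support_monomial]
  have hmem : monomial d (1 : R) ∈ m.initialIdeal I ⊔ m.initialIdeal J :=
    h ▸ mem_initialIdeal_iff.mpr (hsupp ▸ Set.singleton_subset_iff.mpr hd)
  exact Set.singleton_subset_iff.mp (hsupp ▸ mem_initialIdeal_sup_iff.mp hmem)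

end CommSemiring

section Field

variable {m} {K : Type*} [Field K] {I J : Ideal (MvPolynomial σ K)}

theorem sub_smul_eq_zero_or_degree_lt {p q : MvPolynomial σ K} (hq : q ≠ 0)
    (h : m.degree q = m.degree p) :
    p - (m.leadingCoeff p / m.leadingCoeff q) • q = 0 ∨
      m.degree (p - (m.leadingCoeff p / m.leadingCoeff q) • q) ≺[m] m.degree p := by
  set r := p - (m.leadingCoeff p / m.leadingCoeff q) • q
  refine or_iff_not_imp_left.mpr fun hr => lt_of_le_of_ne ?_ fun hdeg => ?_
  · calc m.toSyn (m.degree r) ≤ m.toSyn (m.degree p) ⊔ m.toSyn (m.degree (_ • q)) :=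
          degree_sub_le
      _ ≤ m.toSyn (m.degree p) := sup_le le_rfl (h ▸ degree_smul_le)
  · apply m.leadingCoeff_ne_zero_iff.mpr hr
    change r.coeff (m.degree r) = 0
    rw [m.toSyn.injective hdeg, coeff_sub, coeff_smul, smul_eq_mul]
    nth_rw 2 [← h]
    change m.leadingCoeff p - _ * m.leadingCoeff q = 0
    rw [div_mul_cancel₀ _ (m.leadingCoeff_ne_zero_iff.mpr hq), sub_self]

theorem degree_mem_leadingExponents_inf
    (hIJ : m.leadingExponents (I ⊔ J) ⊆ m.leadingExponents I ∪ m.leadingExponents J)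
    {f g : MvPolynomial σ K} (hf : f ∈ I) (hg : g ∈ J) (hf0 : f ≠ 0)
    (hfg : f - g = 0 ∨ m.degree (f - g) ≺[m] m.degree f) :
    m.degree f ∈ m.leadingExponents (I ⊓ J) := by
  induction hs : m.toSyn (m.degree (f - g)) using WellFoundedLT.induction generalizing f g with
  | _ s ih =>
  by_cases hfg0 : f - g = 0
  · exact ⟨f, ⟨hf, sub_eq_zero.mp hfg0 ▸ hg⟩, hf0, rfl⟩
  replace hfg := hfg.resolve_left hfg0
  have hsup : f - g ∈ I ⊔ J :=
    Submodule.sub_mem _ (Submodule.mem_sup_left hf) (Submodule.mem_sup_right hg)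
  obtain ⟨h, hh, hh0, hdeg⟩ | ⟨h, hh, hh0, hdeg⟩ := hIJ ⟨f - g, hsup, hfg0, rfl⟩
  · set c := m.leadingCoeff (f - g) / m.leadingCoeff h
    have hlt : m.degree (c • h) ≺[m] m.degree f := lt_of_le_of_lt (hdeg ▸ degree_smul_le) hfg
    have hf' : f - c • h ∈ I := I.sub_mem hf (Submodule.smul_of_tower_mem _ c hh)
    have hf'0 : f - c • h ≠ 0 := by
      rw [← m.leadingCoeff_ne_zero_iff, leadingCoeff_sub_of_lt hlt]
      exact m.leadingCoeff_ne_zero_iff.mpr hf0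
    have hdeg' : m.degree (f - c • h) = m.degree f := degree_sub_of_lt hlt
    obtain hr0 | hrlt := sub_smul_eq_zero_or_degree_lt hh0 hdeg
    · rw [sub_right_comm, sub_eq_zero] at hr0
      exact ⟨f - c • h, ⟨hf', hr0 ▸ hg⟩, hf'0, hdeg'⟩
    · rw [sub_right_comm] at hrlt
      exact hdeg' ▸ ih _ (hs ▸ hrlt) hf' hg hf'0 (Or.inr (hdeg' ▸ hrlt.trans hfg)) rfl
  · set c := m.leadingCoeff (f - g) / m.leadingCoeff h
    have hg' : g + c • h ∈ J := J.add_mem hg (Submodule.smul_of_tower_mem _ c hh)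
    obtain hr0 | hrlt := sub_smul_eq_zero_or_degree_lt hh0 hdeg
    · rw [sub_sub, sub_eq_zero] at hr0
      exact ⟨f, ⟨hf, hr0 ▸ hg'⟩, hf0, rfl⟩
    · rw [sub_sub] at hrlt
      exact ih _ (hs ▸ hrlt) hf hg' hf0 (Or.inr (hrlt.trans hfg)) rfl

theorem leadingExponents_inf
    (hIJ : m.leadingExponents (I ⊔ J) ⊆ m.leadingExponents I ∪ m.leadingExponents J) :
    m.leadingExponents (I ⊓ J) = m.leadingExponents I ∩ m.leadingExponents J := by
  refine subset_antisymm (fun d ⟨f, hf, hf0, hd⟩ => ⟨⟨f, hf.1, hf0, hd⟩, ⟨f, hf.2, hf0, hd⟩⟩) ?_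
  rintro d ⟨⟨f, hf, hf0, rfl⟩, ⟨g, hg, hg0, hdeg⟩⟩
  exact degree_mem_leadingExponents_inf hIJ hf (Submodule.smul_of_tower_mem _ _ hg) hf0
    (sub_smul_eq_zero_or_degree_lt hg0 hdeg)

theorem initialIdeal_inf_of_initialIdeal_sup
    (h : m.initialIdeal (I ⊔ J) = m.initialIdeal I ⊔ m.initialIdeal J) :
    m.initialIdeal (I ⊓ J) = m.initialIdeal I ⊓ m.initialIdeal J := by
  ext p
  rw [mem_initialIdeal_iff, mem_initialIdeal_inf_iff,
    leadingExponents_inf (leadingExponents_sup_subset h)]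

end Field

end MonomialOrder

/-- At fixed total degree, `u 0 + u 1` grows as the exponent of `z` drops and, for equal
exponents of `z`, `u 0 + u 2` grows as that of `y` drops: grevlex is the lexicographic order on
this additive key. -/
def grevlexKey (u : Fin 3 →₀ ℕ) : ℕ ×ₗ ℕ ×ₗ ℕ :=
  toLex (u 0 + u 1 + u 2, toLex (u 0 + u 1, u 0 + u 2))

theorem grevlexKey_injective : Function.Injective grevlexKey := by
  intro u v h
  simp only [grevlexKey, toLex_inj, Prod.mk.injEq] at h
  ext i
  match i with
  | 0 => omega
  | 1 => omega
  | 2 => omega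

theorem grevlexKey_add (u v : Fin 3 →₀ ℕ) :
    grevlexKey (u + v) = grevlexKey u + grevlexKey v := by
  simp only [grevlexKey, Finsupp.add_apply, ← toLex_add, Prod.mk_add_mk]
  ring_nf

def GrevlexSyn : Type := Fin 3 →₀ ℕ

namespace GrevlexSyn

noncomputable instance : AddCommMonoid GrevlexSyn :=
  inferInstanceAs (AddCommMonoid (Fin 3 →₀ ℕ))

instance : LinearOrder GrevlexSyn := LinearOrder.lift' grevlexKey grevlexKey_injective

instance : IsOrderedAddMonoid GrevlexSyn where
  add_le_add_left a b h c := (grevlexKey_add a c).trans_le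
    ((add_le_add_left (show grevlexKey a ≤ grevlexKey b from h) _).trans_eq
      (grevlexKey_add b c).symm)

instance : WellFoundedLT GrevlexSyn := ⟨InvImage.wf grevlexKey wellFounded_lt⟩

end GrevlexSyn

noncomputable def MonomialOrder.grevlex : MonomialOrder (Fin 3) where
  syn := GrevlexSyn
  toSyn := AddEquiv.refl _
  toSyn_monotone u v h := by
    change grevlexKey u ≤ grevlexKey v
    have h0 := h 0
    have h1 := h 1
    have h2 := h 2
    simp only [grevlexKey, Prod.Lex.toLex_le_toLex]
    omega

open MonomialOrder (grevlex)

theorem grevlexLt_iff (u v : Fin 3 →₀ ℕ) : GrevlexLt u v ↔ u ≺[grevlex] v := by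
  change _ ↔ grevlexKey u < grevlexKey v
  simp only [GrevlexLt, Finsupp.sum_fintype, Fin.sum_univ_three, Fin.exists_fin_succ,
    Fin.forall_fin_succ, IsEmpty.exists_iff, IsEmpty.forall_iff, Fin.succ_zero_eq_one,
    Fin.succ_one_eq_two, Fin.reduceLT, true_implies, implies_true, true_and, and_true, or_false,
    grevlexKey, Prod.Lex.toLex_lt_toLex]
  omega

theorem isLeadExp_iff {f : MvPolynomial (Fin 3) ℝ} {e : Fin 3 →₀ ℕ} :
    IsLeadExp f e ↔ f ≠ 0 ∧ grevlex.degree f = e := by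
  constructor
  · rintro ⟨he, hmax⟩
    have hf0 : f ≠ 0 := by rintro rfl; simp at he
    refine ⟨hf0, by_contra fun hne => ?_⟩
    exact not_lt_of_ge (grevlex.le_degree_of_mem_support he)
      ((grevlexLt_iff _ _).mp (hmax _ (grevlex.degree_mem_support hf0) hne))
  · rintro ⟨hf0, rfl⟩
    refine ⟨grevlex.degree_mem_support hf0, fun e he hne => (grevlexLt_iff _ _).mpr ?_⟩
    exact lt_of_le_of_ne (grevlex.le_degree_of_mem_support he) (grevlex.toSyn.injective.ne hne)

theorem initialIdeal_eq_grevlex_initialIdeal (I : Ideal (MvPolynomial (Fin 3) ℝ)) :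
    initialIdeal I = grevlex.initialIdeal I := by
  simp only [initialIdeal, MonomialOrder.initialIdeal, MonomialOrder.leadingExponents,
    isLeadExp_iff]
  congr 1
  ext M
  aesop

theorem initial_of_intersection_general (I J : Ideal (MvPolynomial (Fin 3) ℝ))
    (hsum : initialIdeal (I + J) = initialIdeal I + initialIdeal J) :
    initialIdeal (I ⊓ J) = initialIdeal I ⊓ initialIdeal J := by
  simp only [initialIdeal_eq_grevlex_initialIdeal, Submodule.add_eq_sup] at hsum ⊢
  exact MonomialOrder.initialIdeal_inf_of_initialIdeal_sup hsum

/-- Lemma `intersectiondescription`: if `I` is a homogeneous ideal generated by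
polynomials in `x, z` only, `J` is a homogeneous ideal generated by polynomials in
`y, z` only, and `In(I + J) = In(I) + In(J)`, then `In(I ∩ J) = In(I) ∩ In(J)`. -/
theorem initial_of_intersection (I J : Ideal (MvPolynomial (Fin 3) ℝ))
    (hI : ∃ S : Set (MvPolynomial (Fin 3) ℝ), I = Ideal.span S ∧
      ∀ f ∈ S, (∃ n, f.IsHomogeneous n) ∧ ∀ e ∈ f.support, e 1 = 0)
    (hJ : ∃ S : Set (MvPolynomial (Fin 3) ℝ), J = Ideal.span S ∧
      ∀ f ∈ S, (∃ n, f.IsHomogeneous n) ∧ ∀ e ∈ f.support, e 0 = 0)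
    (hsum : initialIdeal (I + J) = initialIdeal I + initialIdeal J) :
    initialIdeal (I ⊓ J) = initialIdeal I ⊓ initialIdeal J :=
  initial_of_intersection_general I J hsum
end

section
/- Let I be a monomial ideal of ℝ[x,y] which in each degree D is spanned by the lex-largest monomials of degree D (a lex-segment ideal), and let e ≥ 0. Then the colon ideal I : y^e is again a lex-segment ideal, and its dimension in degree d equals max(dim I_{d+e} - e, 0). -/
/-!
In degree `D` the generators `x^(D-B) y^B`, `B < N D`, already give `N D ≤ D + 1` independent
monomials of `I_D`; since `dim I_D = N D` there are no others, so the generator exponents form an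
upper set and `f ∈ I` iff every exponent of `f` is a generator exponent. Hence `f y^e ∈ I` iff
every exponent of `f`, shifted by `e` in `y`, is one, which identifies `I : y^e` with the ideal
generated by the `x^A y^B` with `B + e < N (A + B + e)`; its degree-`d` part is counted in the
same way.
-/

open MvPolynomial

/-- The exponent vector of the monomial `x^A y^B` in `ℝ[x,y] = MvPolynomial (Fin 2) ℝ`,
with `x = X 0 > y = X 1`. -/
noncomputable def expVec (A B : ℕ) : Fin 2 →₀ ℕ := Finsupp.single 0 A + Finsupp.single 1 B

namespace MvPolynomial

variable {σ : Type*}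

section CommSemiring

variable {R : Type*} [CommSemiring R] {S : Set (σ →₀ ℕ)}

theorem span_monomial_image_upperClosure :
    Ideal.span ((monomial · (1 : R)) '' ↑(upperClosure S)) =
      Ideal.span ((monomial · (1 : R)) '' S) := by
  refine le_antisymm (Ideal.span_le.mpr ?_) (Ideal.span_mono (Set.image_mono subset_upperClosure))
  rintro _ ⟨t, ht, rfl⟩
  rw [SetLike.mem_coe, mem_ideal_span_monomial_image]
  intro xi hxi
  rw [Finset.mem_singleton.mp (support_monomial_subset hxi)]
  exact mem_upperClosure.mp ht

theorem mem_span_monomial_image_iff (hS : IsUpperSet S) {f : MvPolynomial σ R} :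
    f ∈ Ideal.span ((monomial · (1 : R)) '' S) ↔ ↑f.support ⊆ S := by
  rw [mem_ideal_span_monomial_image]
  exact forall₂_congr fun t _ => ⟨fun ⟨s, hs, hst⟩ => hS hst hs, fun ht => ⟨t, ht, le_rfl⟩⟩

theorem restrictScalars_span_monomial_image (hS : IsUpperSet S) :
    (Ideal.span ((monomial · (1 : R)) '' S)).restrictScalars R = restrictSupport R S := by
  ext f
  exact mem_span_monomial_image_iff hS

theorem support_mul_monomial_subset_iff {f : MvPolynomial σ R} {u : σ →₀ ℕ} {T : Set (σ →₀ ℕ)} :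
    ↑(f * monomial u 1).support ⊆ T ↔ ↑f.support ⊆ (· + u) ⁻¹' T := by
  constructor
  · intro h t ht
    apply h
    simpa [coeff_mul_monomial] using ht
  · intro h m hm
    have hm' := mem_support_iff.mp hm
    rw [coeff_mul_monomial'] at hm'
    split_ifs at hm' with hum
    · have := h (mem_support_iff.mpr (by simpa using hm'))
      simpa [tsub_add_cancel_of_le hum] using this
    · exact (hm' rfl).elim

theorem colon_span_monomial_image (hS : IsUpperSet S) (u : σ →₀ ℕ) :
    (Ideal.span ((monomial · (1 : R)) '' S)).colon (Ideal.span {monomial u (1 : R)}) =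
      Ideal.span ((monomial · (1 : R)) '' ((· + u) ⁻¹' S)) := by
  have hSu : IsUpperSet ((· + u) ⁻¹' S) := hS.preimage fun _ _ h => add_le_add_left h u
  ext f
  rw [Submodule.mem_colon_span_singleton, smul_eq_mul, mem_span_monomial_image_iff hS,
    mem_span_monomial_image_iff hSu, support_mul_monomial_subset_iff]

theorem restrictSupport_inter (s t : Set (σ →₀ ℕ)) :
    restrictSupport R (s ∩ t) = restrictSupport R s ⊓ restrictSupport R t := by
  ext f
  simp only [Submodule.mem_inf, mem_restrictSupport_iff, Set.subset_inter_iff]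

end CommSemiring

section CommRing

variable {R : Type*} [CommRing R] [Nontrivial R]

theorem finrank_restrictSupport (s : Set (σ →₀ ℕ)) :
    Module.finrank R (restrictSupport R s) = s.ncard := by
  rw [Module.finrank_eq_nat_card_basis (basisRestrictSupport R s), Nat.card_coe_set_eq]

theorem finrank_span_monomial_image_inf_homogeneousSubmodule {S : Set (σ →₀ ℕ)}
    (hS : IsUpperSet S) (D : ℕ) :
    Module.finrank R ↥((Ideal.span ((monomial · (1 : R)) '' S)).restrictScalars R ⊓
      homogeneousSubmodule σ R D) = (S ∩ {t | t.degree = D}).ncard := by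
  rw [restrictScalars_span_monomial_image hS, homogeneousSubmodule_eq_finsupp_supported,
    ← restrictSupport, ← restrictSupport_inter, finrank_restrictSupport]

end CommRing

end MvPolynomial

theorem Finsupp.degree_eq_apply_zero_add_apply_one (t : Fin 2 →₀ ℕ) : t.degree = t 0 + t 1 := by
  rw [degree_eq_sum, Fin.sum_univ_two]

section LexSegment

@[simp] theorem expVec_apply_zero (A B : ℕ) : expVec A B 0 = A := by simp [expVec]

@[simp] theorem expVec_apply_one (A B : ℕ) : expVec A B 1 = B := by simp [expVec]

@[simp] theorem degree_expVec (A B : ℕ) : (expVec A B).degree = A + B := by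
  simp [Finsupp.degree_eq_apply_zero_add_apply_one]

theorem expVec_apply_zero_apply_one (t : Fin 2 →₀ ℕ) : expVec (t 0) (t 1) = t := by
  ext i; fin_cases i <;> simp

def lexGens (L : ℕ → ℕ) : Set (Fin 2 →₀ ℕ) := {t | t 1 < L t.degree}

theorem monomial_image_lexGens (R : Type*) [CommSemiring R] (L : ℕ → ℕ) :
    (monomial · (1 : R)) '' lexGens L =
      {m | ∃ A B : ℕ, B < L (A + B) ∧ m = monomial (expVec A B) 1} := by
  ext m
  constructor
  · rintro ⟨t, ht, rfl⟩
    refine ⟨t 0, t 1, ?_, by rw [expVec_apply_zero_apply_one]⟩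
    rwa [← Finsupp.degree_eq_apply_zero_add_apply_one]
  · rintro ⟨A, B, hB, rfl⟩
    exact ⟨expVec A B, by simpa [lexGens] using hB, rfl⟩

theorem preimage_add_single_lexGens (L : ℕ → ℕ) (e : ℕ) :
    (· + Finsupp.single 1 e) ⁻¹' lexGens L = lexGens fun d => L (d + e) - e := by
  ext t
  simp only [lexGens, Set.mem_preimage, Set.mem_ofPred_eq, map_add, Finsupp.degree_single,
    Finsupp.add_apply, Finsupp.single_eq_same]
  omega

theorem lexGens_inter_degree_eq_image {L : ℕ → ℕ} {D : ℕ} (hD : L D ≤ D + 1) :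
    lexGens L ∩ {t | t.degree = D} = (fun B => expVec (D - B) B) '' Set.Iio (L D) := by
  ext t
  constructor
  · rintro ⟨ht, hdeg⟩
    refine ⟨t 1, hdeg ▸ ht, ?_⟩
    dsimp only
    rw [← hdeg, Finsupp.degree_eq_apply_zero_add_apply_one, Nat.add_sub_cancel,
      expVec_apply_zero_apply_one]
  · rintro ⟨B, hB, rfl⟩
    have hBD : B ≤ D := by simp only [Set.mem_Iio] at hB; omega
    simp only [lexGens, Set.mem_inter_iff, Set.mem_ofPred_eq, expVec_apply_one, degree_expVec,
      Nat.sub_add_cancel hBD]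
    exact ⟨hB, trivial⟩

theorem ncard_lexGens_inter_degree {L : ℕ → ℕ} {D : ℕ} (hD : L D ≤ D + 1) :
    (lexGens L ∩ {t | t.degree = D}).ncard = L D := by
  rw [lexGens_inter_degree_eq_image hD, Set.ncard_image_of_injective _
    fun B B' h => by simpa using congrArg (· 1) h, Set.ncard_Iio_nat]

variable {R : Type*} [CommRing R] [Nontrivial R]

theorem finrank_span_lexGens_inf_homogeneousSubmodule {L : ℕ → ℕ} (hL : IsUpperSet (lexGens L))
    {D : ℕ} (hD : L D ≤ D + 1) :
    Module.finrank R ↥((Ideal.span ((monomial · (1 : R)) '' lexGens L)).restrictScalars R ⊓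
      homogeneousSubmodule (Fin 2) R D) = L D := by
  rw [finrank_span_monomial_image_inf_homogeneousSubmodule hL, ncard_lexGens_inter_degree hD]

theorem isUpperSet_lexGens_of_finrank {N : ℕ → ℕ} (hN : ∀ D, N D ≤ D + 1)
    (hdim : ∀ D, Module.finrank R
      ↥((Ideal.span ((monomial · (1 : R)) '' lexGens N)).restrictScalars R ⊓
        homogeneousSubmodule (Fin 2) R D) = N D) :
    IsUpperSet (lexGens N) := by
  intro s t hst hs
  set D := t.degree
  have hfin : (↑(upperClosure (lexGens N)) ∩ {t : Fin 2 →₀ ℕ | t.degree = D}).Finite :=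
    (Finsupp.finite_of_degree_eq D).subset Set.inter_subset_right
  have hcard : (↑(upperClosure (lexGens N)) ∩ {t : Fin 2 →₀ ℕ | t.degree = D}).ncard = N D := by
    rw [← hdim D, ← span_monomial_image_upperClosure,
      finrank_span_monomial_image_inf_homogeneousSubmodule (upperClosure _).upper]
  have heq : lexGens N ∩ {t | t.degree = D} = ↑(upperClosure (lexGens N)) ∩ {t | t.degree = D} :=
    Set.eq_of_subset_of_ncard_le (Set.inter_subset_inter_left _ subset_upperClosure)
      (by rw [hcard, ncard_lexGens_inter_degree (hN D)]) hfin
  have ht : t ∈ ↑(upperClosure (lexGens N)) ∩ {t | t.degree = D} :=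
    ⟨mem_upperClosure.mpr ⟨s, hs, hst⟩, rfl⟩
  exact (heq ▸ ht).1

end LexSegment

/-- Colon of a lex-segment ideal by `y^e`.  Let `I ⊆ ℝ[x,y]` be the monomial ideal which
in each degree `D` is spanned by the `N D` lex-largest monomials of degree `D` (with
`N D = dim I_D`, `N D ≤ D+1`): its monomials `x^A y^B` of degree `D = A+B` are those with
`B < N D`.  Then `I : y^e` is again a lex-segment ideal, whose monomials of degree `d`
are those `x^A y^B` with `B < N (d+e) - e`; in particular its dimension in degree `d` is
`max(dim I_{d+e} - e, 0) = N (d+e) - e` (truncated subtraction). -/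
theorem lex_segment_colon (N : ℕ → ℕ) (hN : ∀ D, N D ≤ D + 1)
    (I : Ideal (MvPolynomial (Fin 2) ℝ))
    (hI : I = Ideal.span {m | ∃ A B : ℕ, B < N (A + B) ∧ m = monomial (expVec A B) 1})
    (hdim : ∀ D : ℕ, Module.finrank ℝ
        ↥(I.restrictScalars ℝ ⊓ homogeneousSubmodule (Fin 2) ℝ D) = N D)
    (e : ℕ) :
    I.colon (Ideal.span {(X 1 : MvPolynomial (Fin 2) ℝ) ^ e}) =
        Ideal.span {m | ∃ A B : ℕ, B < N (A + B + e) - e ∧ m = monomial (expVec A B) 1} ∧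
      ∀ d : ℕ, Module.finrank ℝ
          ↥((I.colon (Ideal.span {(X 1 : MvPolynomial (Fin 2) ℝ) ^ e})).restrictScalars ℝ ⊓
            homogeneousSubmodule (Fin 2) ℝ d) = N (d + e) - e := by
  subst hI
  rw [← monomial_image_lexGens ℝ N] at hdim ⊢
  have hup := isUpperSet_lexGens_of_finrank hN hdim
  have hcolon : (Ideal.span ((monomial · (1 : ℝ)) '' lexGens N)).colon
      (Ideal.span {(X 1 : MvPolynomial (Fin 2) ℝ) ^ e}) =
        Ideal.span ((monomial · (1 : ℝ)) '' lexGens fun d => N (d + e) - e) := by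
    rw [X_pow_eq_monomial, colon_span_monomial_image hup, preimage_add_single_lexGens]
  have hup' : IsUpperSet (lexGens fun d => N (d + e) - e) :=
    preimage_add_single_lexGens N e ▸ hup.preimage fun _ _ h => add_le_add_left h _
  refine ⟨hcolon.trans (congrArg Ideal.span (monomial_image_lexGens ℝ _)), fun d => ?_⟩
  rw [hcolon]
  exact finrank_span_lexGens_inf_homogeneousSubmodule hup' (by have := hN (d + e); omega)
end

section
/- Let s, t, r be integers with 2 ≤ s ≤ t ≤ r+1. Every vertex of the polytope P = {(A,B,C) ∈ ℝ³ : A,B,C ≥ 0, sA + (s-1)C ≤ r+1-s, tB + (t-1)C ≤ r+1-t} satisfies A + B + C ≤ (r+1)/s + (r+1)/t - 2. In particular every point of P satisfies A + B + C ≤ (r+1)/s + (r+1)/t - 2. -/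
/-- Every point of the polytope `P` defined by `A,B,C ≥ 0`, `sA+(s-1)C ≤ r+1-s`,
`tB+(t-1)C ≤ r+1-t` satisfies `A + B + C ≤ (r+1)/s + (r+1)/t - 2`. -/
theorem polytope_max (s t r : ℤ) (hs : 2 ≤ s) (hst : s ≤ t) (htr : t ≤ r + 1)
    (A B C : ℚ) (hA : 0 ≤ A) (hB : 0 ≤ B) (hC : 0 ≤ C)
    (h1 : s * A + (s - 1) * C ≤ r + 1 - s)
    (h2 : t * B + (t - 1) * C ≤ r + 1 - t) :
    A + B + C ≤ ((r : ℚ) + 1) / s + ((r : ℚ) + 1) / t - 2 := by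
  have hsq : (2:ℚ) ≤ (s:ℚ) := by exact_mod_cast hs
  have htq : (2:ℚ) ≤ (t:ℚ) := by exact_mod_cast (hs.trans hst)
  have hs0 : (0:ℚ) < (s:ℚ) := by linarith
  have ht0 : (0:ℚ) < (t:ℚ) := by linarith
  have heq : ((r : ℚ) + 1) / s + ((r : ℚ) + 1) / t - 2
      = (((r:ℚ)+1)*t + ((r:ℚ)+1)*s - 2*(s*t)) / ((s:ℚ)*t) := by
    field_simp
  rw [heq, le_div_iff₀ (by positivity)]
  nlinarith [mul_le_mul_of_nonneg_left h1 ht0.le,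
    mul_le_mul_of_nonneg_left h2 hs0.le,
    mul_nonneg hC (by nlinarith : (0:ℚ) ≤ ((s:ℚ)-1)*((t:ℚ)-1)-1)]
end

section
/- Let s, t, r be integers with 2 ≤ s ≤ t ≤ r+1. Define the closed polyhedron Q̄ = {(A,B,C) ∈ ℝ³ : A,B,C ≥ 0, sA + (s-1)C ≥ r+1-s, tB + (t-1)C ≥ r+1-t}. Then the minimum of A+B+C over Q̄ is (t/(s(t-1)))·r - 1, attained at the point ((t-s)r/(s(t-1)), 0, r/(t-1) - 1), and no point of Q̄ with both defining inequalities strict achieves this minimum. -/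
/-- The minimum of `A+B+C` over the closed polyhedron
`Q̄ = {A,B,C ≥ 0, sA+(s-1)C ≥ r+1-s, tB+(t-1)C ≥ r+1-t}` is `(t/(s(t-1)))r - 1`,
attained at `((t-s)r/(s(t-1)), 0, r/(t-1) - 1)`, and no point of `Q̄` at which both
defining inequalities are strict achieves this minimum. -/
theorem polyhedron_min (s t r : ℤ) (hs : 2 ≤ s) (hst : s ≤ t) (htr : t ≤ r + 1) :
    (∀ A B C : ℚ, 0 ≤ A → 0 ≤ B → 0 ≤ C →
      (r : ℚ) + 1 - s ≤ s * A + (s - 1) * C →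
      (r : ℚ) + 1 - t ≤ t * B + (t - 1) * C →
      (t : ℚ) / (s * (t - 1)) * r - 1 ≤ A + B + C) ∧
    (let A₀ : ℚ := ((t : ℚ) - s) * r / (s * (t - 1));
     let C₀ : ℚ := (r : ℚ) / (t - 1) - 1;
     0 ≤ A₀ ∧ 0 ≤ C₀ ∧ (r : ℚ) + 1 - s ≤ s * A₀ + (s - 1) * C₀ ∧
       (r : ℚ) + 1 - t ≤ t * 0 + (t - 1) * C₀ ∧
       A₀ + 0 + C₀ = (t : ℚ) / (s * (t - 1)) * r - 1) ∧
    (∀ A B C : ℚ, 0 ≤ A → 0 ≤ B → 0 ≤ C →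
      (r : ℚ) + 1 - s < s * A + (s - 1) * C →
      (r : ℚ) + 1 - t < t * B + (t - 1) * C →
      (t : ℚ) / (s * (t - 1)) * r - 1 < A + B + C) := by
  have hsQ : (2 : ℚ) ≤ (s : ℚ) := by exact_mod_cast hs
  have hstQ : (s : ℚ) ≤ (t : ℚ) := by exact_mod_cast hst
  have htrQ : (t : ℚ) ≤ (r : ℚ) + 1 := by exact_mod_cast htr
  have ht1 : (0 : ℚ) < (t : ℚ) - 1 := by linarith
  have hs0 : (0 : ℚ) < (s : ℚ) := by linarith
  have hst1 : (0 : ℚ) < (s : ℚ) * ((t : ℚ) - 1) := mul_pos hs0 ht1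
  have hr0 : (0 : ℚ) ≤ (r : ℚ) := by linarith
  have hdom : (t : ℚ) ≤ (s : ℚ) * ((t : ℚ) - 1) := by nlinarith
  refine ⟨?_, ?_, ?_⟩
  · intro A B C hA hB hC h1 h2
    rw [div_mul_eq_mul_div, sub_le_iff_le_add, div_le_iff₀ hst1]
    nlinarith [mul_nonneg (le_of_lt ht1) (sub_nonneg.mpr h1),
      mul_nonneg (sub_nonneg.mpr hdom) hB]
  · intro A₀ C₀
    have hA0 : 0 ≤ A₀ := by
      apply div_nonneg _ (le_of_lt hst1)
      exact mul_nonneg (by linarith) hr0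
    have hC0 : 0 ≤ C₀ := by
      rw [sub_nonneg, le_div_iff₀ ht1]
      linarith
    have hA0eq : A₀ * ((s : ℚ) * ((t : ℚ) - 1)) = ((t : ℚ) - s) * r :=
      div_mul_cancel₀ _ (ne_of_gt hst1)
    have hC0eq : C₀ * ((t : ℚ) - 1) = (r : ℚ) - ((t : ℚ) - 1) := by
      simp only [C₀, sub_mul, div_mul_cancel₀ _ (ne_of_gt ht1)]
      ring
    refine ⟨hA0, hC0, ?_, ?_, ?_⟩
    · have heq : (s : ℚ) * A₀ + ((s : ℚ) - 1) * C₀ = (r : ℚ) + 1 - s := by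
        simp only [A₀, C₀]
        field_simp
        ring
      linarith [heq]
    · nlinarith [hC0eq]
    · rw [div_mul_eq_mul_div, eq_sub_iff_add_eq, eq_div_iff (ne_of_gt hst1)]
      nlinarith [hA0eq, hC0eq]
  · intro A B C hA hB hC h1 h2
    rw [div_mul_eq_mul_div, sub_lt_iff_lt_add, div_lt_iff₀ hst1]
    nlinarith [mul_pos ht1 (sub_pos.mpr h1),
      mul_nonneg (sub_nonneg.mpr hdom) hB]
end

section
/- Let s, t, r be integers with 2 ≤ s ≤ t ≤ r+1. Every integer point (A,B,C) with A,B,C ≥ 0 satisfying sA + (s-1)C > r+1-s and tB + (t-1)C > r+1-t has A + B + C > (t/(s(t-1)))·r - 1. -/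
/-- Lattice-point form of Corollary `crosscut`: every nonnegative integer point with
`sA + (s-1)C > r+1-s` and `tB + (t-1)C > r+1-t` satisfies
`A + B + C > (t/(s(t-1)))r - 1`. -/
theorem crosscut_initdeg (s t r : ℤ) (hs : 2 ≤ s) (hst : s ≤ t) (htr : t ≤ r + 1)
    (A B C : ℤ) (hA : 0 ≤ A) (hB : 0 ≤ B) (hC : 0 ≤ C)
    (h1 : r + 1 - s < s * A + (s - 1) * C)
    (h2 : r + 1 - t < t * B + (t - 1) * C) :
    ((A : ℚ) + B + C) > (t : ℚ) / (s * (t - 1)) * r - 1 := by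
  have ht2 : (2:ℤ) ≤ t := le_trans hs hst
  have h1' : r + 2 - s ≤ s * A + (s - 1) * C := by linarith
  have h2' : r + 2 - t ≤ t * B + (t - 1) * C := by linarith
  have key : t * r < s * (t - 1) * (A + B + C + 1) := by
    nlinarith [mul_nonneg hB (show (0:ℤ) ≤ s * (t - 1) - t by nlinarith),
      mul_le_mul_of_nonneg_left h1' (show (0:ℤ) ≤ t - 1 by linarith)]
  have hpos : (0:ℚ) < (s:ℚ) * ((t:ℚ) - 1) := by
    have : (0:ℤ) < s * (t - 1) := by nlinarith
    exact_mod_cast this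
  rw [gt_iff_lt, sub_lt_iff_lt_add, div_mul_eq_mul_div, div_lt_iff₀ hpos]
  have : ((t * r : ℤ) : ℚ) < ((s * (t - 1) * (A + B + C + 1) : ℤ) : ℚ) := by
    exact_mod_cast key
  push_cast at this ⊢
  nlinarith [this]
end
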